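/- arXiv:2412.07291 — 15 statements merged into one kernel-verified Lean document; each statement's English description precedes it below -/
import Mathlib

section
/- Let n ≥ 1, λ : Fin n → ℝ, and let P(λ) be the population polytope of λ. A set F ⊆ (Fin n → ℝ) is an edge of P(λ) if and only if there exist a coordinate permutation b = λ ∘ σ of λ and indices i, j : Fin n such that b i and b j are adjacent-valued and F is the closed segment [b, b ∘ (Equiv.swap i j)] joining b to the av-swap of b at i, j. -/
/-!
All permutations of `λ` have the same Euclidean norm, so the vertices of `P(λ)` lie on a sphere
and no three of them are collinear. A face exposed by `⟨w, ·⟩` is the convex hull of the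
permutations maximizing `⟨w, ·⟩`, so an edge carries exactly two of them. A maximizer `p` is
monovarying with `w`, and swapping two coordinates of equal weight keeps it a maximizer; were `p`
constant on the level sets of `w` it would be the only maximizer. Hence an edge is
`[p, p ∘ swap i j]` with `w i = w j`, and a value of `p` strictly between `p i` and `p j` would
give a third vertex `p ∘ swap i k`.

Conversely, for adjacent values `b j < b i`, let `w` be `b` with both coordinates `i`, `j` replaced
by their mean. On the sphere, maximizing `⟨w, ·⟩` is minimizing the distance to `w`, and since no
value of `b` lies strictly between `b j` and `b i`, the nearest permutations are exactly `b` and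
`b ∘ swap i j`.
-/

open Set

section ExposedFaces

variable {E : Type*} [AddCommGroup E] [Module ℝ E] [TopologicalSpace E] [T2Space E]
  [IsTopologicalAddGroup E] [ContinuousSMul ℝ E] [LocallyConvexSpace ℝ E] {s F : Set E}

theorem IsExposed.eq_convexHull_inter (hs : s.Finite) (hF : IsExposed ℝ (convexHull ℝ s) F) :
    F = convexHull ℝ (F ∩ s) := by
  have hcomp : IsCompact F := hF.isCompact (hs.isCompact_convexHull (𝕜 := ℝ))
  have hconv : Convex ℝ F := hF.convex (convex_convexHull ℝ s)
  refine Subset.antisymm ?_ (convexHull_min inter_subset_left hconv)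
  calc F = closure (convexHull ℝ (F.extremePoints ℝ)) :=
        (closure_convexHull_extremePoints hcomp hconv).symm
    _ ⊆ closure (convexHull ℝ (F ∩ s)) := closure_mono <| convexHull_mono fun _ hx =>
        ⟨extremePoints_subset hx, extremePoints_convexHull_subset
          (hF.isExtreme.extremePoints_subset_extremePoints hx)⟩
    _ = convexHull ℝ (F ∩ s) := ((hs.inter_of_right F).isClosed_convexHull (𝕜 := ℝ)).closure_eq

theorem ContinuousLinearMap.toExposed_convexHull (l : StrongDual ℝ E) (hs : s.Finite) {a : E}
    (ha : a ∈ s) (hmax : ∀ x ∈ s, l x ≤ l a) :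
    l.toExposed (convexHull ℝ s) = convexHull ℝ {x ∈ s | l x = l a} := by
  have hle : ∀ y ∈ convexHull ℝ s, l y ≤ l a := fun _ hy =>
    convexHull_min hmax (convex_halfSpace_le l.toLinearMap.isLinear (l a)) hy
  have hinter : l.toExposed (convexHull ℝ s) ∩ s = {x ∈ s | l x = l a} := by
    ext x
    exact ⟨fun ⟨⟨_, hx⟩, hxs⟩ => ⟨hxs, (hmax x hxs).antisymm (hx a (subset_convexHull ℝ s ha))⟩,
      fun ⟨hxs, hx⟩ => ⟨⟨subset_convexHull ℝ s hxs, fun y hy => hx ▸ hle y hy⟩, hxs⟩⟩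
  rw [ContinuousLinearMap.toExposed.isExposed.eq_convexHull_inter hs, hinter]

end ExposedFaces

theorem finrank_vectorSpan_segment {E : Type*} [AddCommGroup E] [Module ℝ E] {x y : E}
    (h : x ≠ y) : Module.finrank ℝ (vectorSpan ℝ (segment ℝ x y)) = 1 := by
  rw [← convexHull_pair, ← direction_affineSpan, affineSpan_convexHull, direction_affineSpan,
    vectorSpan_pair, finrank_span_singleton (vsub_ne_zero.2 h)]

section Sphere

variable {ι : Type*} [Fintype ι] {x y z : ι → ℝ} {r : ℝ}

theorem Wbtw.eq_or_eq_of_dotProduct_self_eq (h : Wbtw ℝ x y z) (hx : x ⬝ᵥ x = r)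
    (hy : y ⬝ᵥ y = r) (hz : z ⬝ᵥ z = r) : y = x ∨ y = z := by
  obtain ⟨t, -, rfl⟩ := h
  rw [AffineMap.lineMap_apply_module] at hy ⊢
  have key : t * (1 - t) * ((x - z) ⬝ᵥ (x - z)) = 0 := by
    simp only [add_dotProduct, dotProduct_add, smul_dotProduct, dotProduct_smul, sub_dotProduct,
      dotProduct_sub, smul_eq_mul, dotProduct_comm z x] at hy ⊢
    linear_combination (1 - t) * hx + t * hz - hy
  rcases mul_eq_zero.1 key with h | h
  · rcases mul_eq_zero.1 h with rfl | h
    · simp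
    · obtain rfl : t = 1 := by linarith
      simp
  · obtain rfl : x = z := sub_eq_zero.1 (dotProduct_self_eq_zero.1 h)
    simp [← add_smul]

theorem Collinear.eq_or_eq_or_eq_of_dotProduct_self_eq {M : Set (ι → ℝ)} (hM : Collinear ℝ M)
    (hr : ∀ u ∈ M, u ⬝ᵥ u = r) (hx : x ∈ M) (hy : y ∈ M) (hz : z ∈ M) :
    x = y ∨ x = z ∨ y = z := by
  have hxyz : Collinear ℝ {x, y, z} := hM.subset (by simp [insert_subset_iff, hx, hy, hz])
  rcases hxyz.wbtw_or_wbtw_or_wbtw with h | h | h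
  · rcases h.eq_or_eq_of_dotProduct_self_eq (hr x hx) (hr y hy) (hr z hz) with rfl | rfl <;> simp
  · rcases h.eq_or_eq_of_dotProduct_self_eq (hr y hy) (hr z hz) (hr x hx) with rfl | rfl <;> simp
  · rcases h.eq_or_eq_of_dotProduct_self_eq (hr z hz) (hr x hx) (hr y hy) with rfl | rfl <;> simp

end Sphere

section Rearrangements

variable {ι α : Type*}

def rearrangements (b : ι → α) : Set (ι → α) := {x | ∃ σ : Equiv.Perm ι, x = b ∘ σ}

def AdjacentValued [LinearOrder α] (b : ι → α) (i j : ι) : Prop :=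
  b i ≠ b j ∧ ∀ k, ¬(b i < b k ∧ b k < b j) ∧ ¬(b j < b k ∧ b k < b i)

variable {b x : ι → α}

theorem self_mem_rearrangements (b : ι → α) : b ∈ rearrangements b := ⟨1, rfl⟩

theorem comp_mem_rearrangements (hx : x ∈ rearrangements b) (σ : Equiv.Perm ι) :
    x ∘ σ ∈ rearrangements b := by
  obtain ⟨τ, rfl⟩ := hx
  exact ⟨σ.trans τ, rfl⟩

theorem rearrangements_eq_of_mem (hx : x ∈ rearrangements b) :
    rearrangements x = rearrangements b := by
  obtain ⟨τ, rfl⟩ := hx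
  ext y
  constructor
  · rintro ⟨σ, rfl⟩
    exact comp_mem_rearrangements ⟨τ, rfl⟩ σ
  · rintro ⟨σ, rfl⟩
    exact ⟨σ.trans τ.symm, by ext; simp⟩

theorem rearrangements_finite [Finite ι] (b : ι → α) : (rearrangements b).Finite :=
  (finite_range fun σ : Equiv.Perm ι => b ∘ σ).subset fun _ ⟨σ, hσ⟩ => ⟨σ, hσ.symm⟩

theorem sum_comp_of_mem_rearrangements [Fintype ι] {β : Type*} [AddCommMonoid β]
    (hx : x ∈ rearrangements b) (f : α → β) : ∑ k, f (x k) = ∑ k, f (b k) := by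
  obtain ⟨σ, rfl⟩ := hx
  exact Equiv.sum_comp σ (f ∘ b)

theorem dotProduct_self_of_mem_rearrangements [Fintype ι] [Mul α] [AddCommMonoid α]
    (hx : x ∈ rearrangements b) : x ⬝ᵥ x = b ⬝ᵥ b :=
  sum_comp_of_mem_rearrangements hx fun v => v * v

theorem dotProduct_comp_swap [Fintype ι] [DecidableEq ι] [CommRing α] (w x : ι → α) (a c : ι) :
    w ⬝ᵥ (x ∘ Equiv.swap a c) = w ⬝ᵥ x - (w a - w c) * (x a - x c) := by
  have : x ∘ Equiv.swap a c = x + Pi.single a (x c - x a) + Pi.single c (x a - x c) := by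
    ext k
    rcases eq_or_ne k a with rfl | hka <;> rcases eq_or_ne k c with rfl | hkc <;>
      simp [Equiv.swap_apply_of_ne_of_ne, *]
  rw [this, dotProduct_add, dotProduct_add, dotProduct_single, dotProduct_single]
  ring

end Rearrangements

section Maximizers

variable {ι : Type*} [Fintype ι] {w x p b : ι → ℝ}

theorem monovary_of_forall_dotProduct_le [DecidableEq ι]
    (hx : ∀ y ∈ rearrangements x, w ⬝ᵥ y ≤ w ⬝ᵥ x) : Monovary x w := by
  intro a c hw
  by_contra! hxac
  have := hx _ (comp_mem_rearrangements (self_mem_rearrangements x) (Equiv.swap a c))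
  rw [dotProduct_comp_swap] at this
  nlinarith

theorem eq_of_mem_rearrangements_of_dotProduct_eq (hx : x ∈ rearrangements b)
    (h : b ⬝ᵥ x = b ⬝ᵥ b) : x = b := by
  have hxx := dotProduct_self_of_mem_rearrangements hx
  refine sub_eq_zero.1 (dotProduct_self_eq_zero.1 ?_)
  simp only [sub_dotProduct, dotProduct_sub, dotProduct_comm x b]
  linarith

/-- Here `x` monovaries with `p` itself, so the equality case of the rearrangement inequality
gives `⟨p, x⟩ = ⟨p, p⟩`. -/
theorem eq_of_monovary_of_forall_eq (hp : Monovary p w) (hx : Monovary x w)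
    (hxp : x ∈ rearrangements p) (hlev : ∀ a c, w a = w c → p a = p c) : x = p := by
  have hxp' : Monovary x p := fun a c hpac => hx <| lt_of_not_ge fun hwca =>
    hwca.lt_or_eq.elim (fun h => (hp h).not_gt hpac) (fun h => hpac.ne (hlev _ _ h).symm)
  refine eq_of_mem_rearrangements_of_dotProduct_eq hxp ?_
  obtain ⟨σ, rfl⟩ := hxp
  exact (monovary_self p).sum_mul_comp_perm_eq_sum_mul_iff.2 (monovary_comm.1 hxp')

theorem exists_adjacentValued_of_collinear [DecidableEq ι]
    (hp : ∀ y ∈ rearrangements p, w ⬝ᵥ y ≤ w ⬝ᵥ p)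
    (hM : Collinear ℝ {x ∈ rearrangements p | w ⬝ᵥ x = w ⬝ᵥ p})
    {q : ι → ℝ} (hq : q ∈ rearrangements p) (hwq : w ⬝ᵥ q = w ⬝ᵥ p) (hqp : q ≠ p) :
    ∃ i j, AdjacentValued p i j ∧
      {x ∈ rearrangements p | w ⬝ᵥ x = w ⬝ᵥ p} = {p, p ∘ Equiv.swap i j} := by
  set M := {x ∈ rearrangements p | w ⬝ᵥ x = w ⬝ᵥ p}
  have hpM : p ∈ M := ⟨self_mem_rearrangements p, rfl⟩
  have hswap : ∀ a c, w a = w c → p ∘ Equiv.swap a c ∈ M := fun a c h =>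
    ⟨comp_mem_rearrangements (self_mem_rearrangements p) _,
      by rw [dotProduct_comp_swap, h, sub_self, zero_mul, sub_zero]⟩
  have three : ∀ x ∈ M, ∀ y ∈ M, ∀ z ∈ M, x = y ∨ x = z ∨ y = z := fun _ hx _ hy _ hz =>
    hM.eq_or_eq_or_eq_of_dotProduct_self_eq
      (fun _ hu => dotProduct_self_of_mem_rearrangements hu.1) hx hy hz
  have hmono : Monovary p w := monovary_of_forall_dotProduct_le hp
  obtain ⟨i, j, hw, hpij⟩ : ∃ i j, w i = w j ∧ p i ≠ p j := by
    by_contra! h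
    refine hqp (eq_of_monovary_of_forall_eq hmono (monovary_of_forall_dotProduct_le ?_) hq h)
    rwa [rearrangements_eq_of_mem hq, hwq]
  have between : ∀ a c k, w a = w c → p a < p k → p k < p c → False := by
    intro a c k hac hak hkc
    rcases lt_trichotomy (w k) (w a) with h | h | h
    · exact (hmono h).not_gt hak
    -- `p`, `p ∘ swap a c` and `p ∘ swap a k` would be three distinct collinear maximizers.
    · rcases three _ (hswap a c hac) _ (hswap a k h.symm) _ hpM with h | h | h <;>
        have := congrFun h a <;> simp only [Function.comp_apply, Equiv.swap_apply_left] at this <;>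
        linarith
    · exact (hmono (hac.symm.trans_lt h)).not_gt hkc
  have hne : p ∘ Equiv.swap i j ≠ p := fun h => hpij (by simpa using (congrFun h i).symm)
  refine ⟨i, j, ⟨hpij, fun k => ⟨fun h => between i j k hw h.1 h.2,
    fun h => between j i k hw.symm h.1 h.2⟩⟩, ?_⟩
  ext x
  constructor
  · intro hx
    rcases three x hx p hpM _ (hswap i j hw) with h | h | h
    · exact Or.inl h
    · exact Or.inr h
    · exact absurd h.symm hne
  · rintro (rfl | rfl)
    exacts [hpM, hswap i j hw]

theorem exists_adjacentValued_of_isExposed [DecidableEq ι] {F : Set (ι → ℝ)}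
    (hF : IsExposed ℝ (convexHull ℝ (rearrangements b)) F) (hne : F.Nonempty)
    (hrank : Module.finrank ℝ (vectorSpan ℝ F) = 1) :
    ∃ p ∈ rearrangements b, ∃ i j, AdjacentValued p i j ∧
      F = segment ℝ p (p ∘ Equiv.swap i j) := by
  obtain ⟨l, hlF⟩ := hF hne
  obtain ⟨p, hp, hpmax⟩ := (rearrangements b).exists_max_image l (rearrangements_finite b)
    ⟨b, self_mem_rearrangements b⟩
  set w := (dotProductEquiv ℝ ι).symm l.toLinearMap
  have hl : ∀ x, l x = w ⬝ᵥ x := fun x =>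
    (LinearMap.congr_fun ((dotProductEquiv ℝ ι).apply_symm_apply l.toLinearMap) x).symm
  obtain rfl : F = convexHull ℝ {x ∈ rearrangements b | l x = l p} :=
    hlF.trans (l.toExposed_convexHull (rearrangements_finite b) hp hpmax)
  have hM :
      {x ∈ rearrangements b | l x = l p} = {x ∈ rearrangements p | w ⬝ᵥ x = w ⬝ᵥ p} := by
    simp only [hl, rearrangements_eq_of_mem hp]
  rw [hM] at hrank ⊢
  simp only [hl, ← rearrangements_eq_of_mem hp] at hpmax
  have hcol : Collinear ℝ {x ∈ rearrangements p | w ⬝ᵥ x = w ⬝ᵥ p} :=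
    collinear_iff_finrank_le_one.2 <|
      hrank ▸ Submodule.finrank_mono (vectorSpan_mono ℝ (subset_convexHull ℝ _))
  obtain ⟨q, hq, hqp⟩ : ∃ q ∈ {x ∈ rearrangements p | w ⬝ᵥ x = w ⬝ᵥ p}, q ≠ p := by
    by_contra! h
    have : {x ∈ rearrangements p | w ⬝ᵥ x = w ⬝ᵥ p} = {p} :=
      eq_singleton_iff_unique_mem.2 ⟨⟨self_mem_rearrangements p, rfl⟩, h⟩
    rw [this, convexHull_singleton, vectorSpan_singleton, finrank_bot] at hrank
    exact zero_ne_one hrank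
  obtain ⟨i, j, hadj, hpair⟩ := exists_adjacentValued_of_collinear hpmax hcol hq.1 hq.2 hqp
  exact ⟨p, hp, i, j, hadj, by rw [hpair, convexHull_pair]⟩

end Maximizers

section Converse

variable {ι : Type*} {b x : ι → ℝ} {i j : ι}

theorem two_mul_dotProduct_sub_eq_sum [Fintype ι] (hx : x ∈ rearrangements b) (w : ι → ℝ) :
    2 * (w ⬝ᵥ b - w ⬝ᵥ x) = ∑ k, ((x k - w k) ^ 2 - (b k - w k) ^ 2) := by
  have hxx := dotProduct_self_of_mem_rearrangements hx
  have hk : ∀ k, (x k - w k) ^ 2 - (b k - w k) ^ 2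
      = x k * x k - b k * b k + 2 * (w k * b k - w k * x k) := fun k => by ring
  simp only [hk, Finset.sum_add_distrib, Finset.sum_sub_distrib, ← Finset.mul_sum]
  simp only [dotProduct] at hxx ⊢
  linarith

noncomputable def meanAt [DecidableEq ι] (b : ι → ℝ) (i j : ι) : ι → ℝ :=
  fun k => if k = i ∨ k = j then (b i + b j) / 2 else b k

theorem sq_sub_meanAt_le [DecidableEq ι] (hb : b j < b i) (hadj : ∀ k, ¬(b j < b k ∧ b k < b i))
    (hx : x ∈ rearrangements b) (k : ι) :
    (b k - meanAt b i j k) ^ 2 ≤ (x k - meanAt b i j k) ^ 2 := by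
  obtain ⟨σ, rfl⟩ := hx
  simp only [meanAt, Function.comp_apply]
  split_ifs with hk
  · have : b (σ k) ≤ b j ∨ b i ≤ b (σ k) := by
      by_contra! h
      exact hadj _ h
    rcases hk with rfl | rfl <;> rcases this with h | h <;> nlinarith
  · simp [sq_nonneg]

theorem dotProduct_meanAt_le [Fintype ι] [DecidableEq ι] (hb : b j < b i)
    (hadj : ∀ k, ¬(b j < b k ∧ b k < b i))
    (hx : x ∈ rearrangements b) : meanAt b i j ⬝ᵥ x ≤ meanAt b i j ⬝ᵥ b := by
  have := two_mul_dotProduct_sub_eq_sum hx (meanAt b i j)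
  have := Finset.sum_nonneg (s := Finset.univ) fun k _ =>
    sub_nonneg.2 (sq_sub_meanAt_le hb hadj hx k)
  linarith

theorem eq_or_eq_comp_swap_of_dotProduct_meanAt_eq [Fintype ι] [DecidableEq ι] (hb : b j < b i)
    (hadj : ∀ k, ¬(b j < b k ∧ b k < b i)) (hx : x ∈ rearrangements b)
    (h : meanAt b i j ⬝ᵥ x = meanAt b i j ⬝ᵥ b) : x = b ∨ x = b ∘ Equiv.swap i j := by
  have hterm : ∀ k, (x k - meanAt b i j k) ^ 2 = (b k - meanAt b i j k) ^ 2 := by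
    have := two_mul_dotProduct_sub_eq_sum hx (meanAt b i j)
    rw [h, sub_self, mul_zero, eq_comm, Finset.sum_eq_zero_iff_of_nonneg
      fun k _ => sub_nonneg.2 (sq_sub_meanAt_le hb hadj hx k)] at this
    exact fun k => sub_eq_zero.1 (this k (Finset.mem_univ k))
  have hij : i ≠ j := by rintro rfl; exact hb.false
  have hoff : ∀ k, k ≠ i → k ≠ j → x k = b k := fun k hki hkj => by
    simpa [meanAt, hki, hkj, sub_eq_zero] using hterm k
  have hi : x i = b i ∨ x i = b j := by
    have := hterm i
    simp only [meanAt, true_or, if_true, sq_eq_sq_iff_eq_or_eq_neg] at this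
    exact this.imp (by intro h; linarith) (by intro h; linarith)
  have hj : x j = b j ∨ x j = b i := by
    have := hterm j
    simp only [meanAt, or_true, if_true, sq_eq_sq_iff_eq_or_eq_neg] at this
    exact this.imp (by intro h; linarith) (by intro h; linarith)
  have hsum := Fintype.sum_eq_add (f := fun k => x k - b k) i j hij
    fun k hk => sub_eq_zero.2 (hoff k hk.1 hk.2)
  rw [Finset.sum_sub_distrib, sum_comp_of_mem_rearrangements hx (fun v => v), sub_self] at hsum
  rcases hi with hi | hi <;> rcases hj with hj | hj
  · left
    ext k
    by_cases hki : k = i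
    · rw [hki, hi]
    by_cases hkj : k = j
    · rw [hkj, hj]
    exact hoff k hki hkj
  · linarith
  · linarith
  · right
    ext k
    by_cases hki : k = i
    · simp [hki, hi]
    by_cases hkj : k = j
    · simp [hkj, hj]
    simp [hoff k hki hkj, Equiv.swap_apply_of_ne_of_ne hki hkj]

theorem isExposed_segment_comp_swap [Fintype ι] [DecidableEq ι] (hb : b j < b i)
    (hadj : ∀ k, ¬(b j < b k ∧ b k < b i)) :
    IsExposed ℝ (convexHull ℝ (rearrangements b)) (segment ℝ b (b ∘ Equiv.swap i j)) := by
  intro _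
  let l : StrongDual ℝ (ι → ℝ) :=
    LinearMap.toContinuousLinearMap (dotProductEquiv ℝ ι (meanAt b i j))
  have hl : ∀ x, l x = meanAt b i j ⬝ᵥ x := fun _ => rfl
  have hmax : {x ∈ rearrangements b | l x = l b} = {b, b ∘ Equiv.swap i j} := by
    ext x
    simp only [hl, mem_insert_iff, mem_singleton_iff, mem_ofPred_eq]
    refine ⟨fun ⟨hx, h⟩ => eq_or_eq_comp_swap_of_dotProduct_meanAt_eq hb hadj hx h, ?_⟩
    rintro (rfl | rfl)
    · exact ⟨self_mem_rearrangements x, rfl⟩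
    · refine ⟨comp_mem_rearrangements (self_mem_rearrangements b) _, ?_⟩
      rw [dotProduct_comp_swap]
      simp [meanAt]
  refine ⟨l, ?_⟩
  rw [← convexHull_pair, ← hmax]
  exact (l.toExposed_convexHull (rearrangements_finite b) (self_mem_rearrangements b)
    fun x hx => dotProduct_meanAt_le hb hadj hx).symm

theorem AdjacentValued.isExposed_segment [Fintype ι] [DecidableEq ι]
    (h : AdjacentValued b i j) :
    IsExposed ℝ (convexHull ℝ (rearrangements b)) (segment ℝ b (b ∘ Equiv.swap i j)) := by
  rcases h.1.lt_or_gt with hb | hb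
  · rw [Equiv.swap_comm]
    exact isExposed_segment_comp_swap hb fun k => (h.2 k).1
  · exact isExposed_segment_comp_swap hb fun k => (h.2 k).2

end Converse

theorem stmt_0_general (n : ℕ) (lam : Fin n → ℝ)
    (P : Set (Fin n → ℝ))
    (hP : P = convexHull ℝ {x : Fin n → ℝ | ∃ σ : Equiv.Perm (Fin n), x = lam ∘ σ})
    (F : Set (Fin n → ℝ)) :
    (F.Nonempty ∧ IsExposed ℝ P F ∧ Module.finrank ℝ ↥(vectorSpan ℝ F) = 1) ↔
      ∃ (σ : Equiv.Perm (Fin n)) (i j : Fin n),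
        (lam ∘ σ) i ≠ (lam ∘ σ) j ∧
        (∀ k : Fin n,
          ¬((lam ∘ σ) i < (lam ∘ σ) k ∧ (lam ∘ σ) k < (lam ∘ σ) j) ∧
          ¬((lam ∘ σ) j < (lam ∘ σ) k ∧ (lam ∘ σ) k < (lam ∘ σ) i)) ∧
        F = segment ℝ (lam ∘ σ) ((lam ∘ σ) ∘ (Equiv.swap i j)) := by
  change P = convexHull ℝ (rearrangements lam) at hP
  subst hP
  constructor
  · rintro ⟨hne, hexp, hrank⟩
    obtain ⟨_, ⟨σ, rfl⟩, i, j, hadj, rfl⟩ := exists_adjacentValued_of_isExposed hexp hne hrank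
    exact ⟨σ, i, j, hadj.1, hadj.2, rfl⟩
  · rintro ⟨σ, i, j, hij, hadj, rfl⟩
    refine ⟨⟨_, left_mem_segment ℝ _ _⟩, ?_, finrank_vectorSpan_segment fun h => hij ?_⟩
    · rw [← rearrangements_eq_of_mem ⟨σ, rfl⟩]
      exact AdjacentValued.isExposed_segment ⟨hij, hadj⟩
    · simpa using congrFun h i

/-- The edges of the population polytope of `lam` are exactly the closed
segments joining a coordinate permutation `b` of `lam` to an adjacent-valued swap of `b`. -/
theorem stmt_0 (n : ℕ) (hn : 1 ≤ n) (lam : Fin n → ℝ)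
    (P : Set (Fin n → ℝ))
    (hP : P = convexHull ℝ {x : Fin n → ℝ | ∃ σ : Equiv.Perm (Fin n), x = lam ∘ σ})
    (F : Set (Fin n → ℝ)) :
    (F.Nonempty ∧ IsExposed ℝ P F ∧ Module.finrank ℝ ↥(vectorSpan ℝ F) = 1) ↔
      ∃ (σ : Equiv.Perm (Fin n)) (i j : Fin n),
        (lam ∘ σ) i ≠ (lam ∘ σ) j ∧
        (∀ k : Fin n,
          ¬((lam ∘ σ) i < (lam ∘ σ) k ∧ (lam ∘ σ) k < (lam ∘ σ) j) ∧
          ¬((lam ∘ σ) j < (lam ∘ σ) k ∧ (lam ∘ σ) k < (lam ∘ σ) i)) ∧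
        F = segment ℝ (lam ∘ σ) ((lam ∘ σ) ∘ (Equiv.swap i j)) :=
  stmt_0_general n lam P hP F
end

section
/- Let S ⊆ (Fin n → ℝ) be finite and P = convexHull ℝ S. If F is an edge of P, then there exist two distinct extreme points V and W of P such that F is the closed segment [V, W]; moreover this pair is unique: if V', W' are distinct extreme points of P with F = [V', W'], then {V', W'} = {V, W}. -/
/-!
An exposed face `F` of the polytope `P` is compact and convex, and `dim F = 1` puts it on a line
`t ↦ t • v + x`; pulled back to that line it is a compact interval, so `F = [V, W]` with `V ≠ W`.
The extreme points of a segment are exactly its two endpoints, which gives uniqueness, and since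
an exposed face is an extreme subset, extreme points of `F` are extreme points of `P`.
-/

open Set Module

section ExtremePoints

variable {𝕜 E F : Type*} [Field 𝕜] [LinearOrder 𝕜] [IsStrictOrderedRing 𝕜]
  [AddCommGroup E] [Module 𝕜 E] [AddCommGroup F] [Module 𝕜 F]

theorem Function.Injective.image_extremePoints {f : E →ᵃ[𝕜] F} (hf : Function.Injective f)
    (s : Set E) : f '' s.extremePoints 𝕜 = (f '' s).extremePoints 𝕜 := by
  ext y
  simp only [mem_image, mem_extremePoints, forall_exists_index, and_imp, forall_apply_eq_imp_iff₂]
  constructor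
  · rintro ⟨x, ⟨hxs, hx⟩, rfl⟩
    refine ⟨⟨x, hxs, rfl⟩, fun x₁ hx₁ x₂ hx₂ hseg => ?_⟩
    rw [← image_openSegment, hf.mem_set_image] at hseg
    exact (hx x₁ hx₁ x₂ hx₂ hseg).imp (congrArg f) (congrArg f)
  · rintro ⟨⟨x, hxs, rfl⟩, hx⟩
    refine ⟨x, ⟨hxs, fun x₁ hx₁ x₂ hx₂ hseg => ?_⟩, rfl⟩
    exact (hx x₁ hx₁ x₂ hx₂ (image_openSegment 𝕜 f x₁ x₂ ▸ mem_image_of_mem f hseg)).imp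
      (hf ·) (hf ·)

theorem extremePoints_Icc {a b : 𝕜} (hab : a ≤ b) : (Icc a b).extremePoints 𝕜 = {a, b} := by
  refine Subset.antisymm ?_ ?_
  · rw [← segment_eq_Icc hab, ← convexHull_pair]
    exact extremePoints_convexHull_subset
  rintro x (rfl | rfl) <;> refine mem_extremePoints_iff_forall_segment.2 ⟨by simp [hab], ?_⟩ <;>
    rintro y ⟨hy, hy'⟩ z ⟨hz, hz'⟩ hseg <;>
    simp only [segment_eq_Icc', mem_Icc, min_le_iff, le_max_iff] at hseg
  · rcases hseg.1 with h | h
    exacts [.inl (le_antisymm h hy), .inr (le_antisymm h hz)]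
  · rcases hseg.2 with h | h
    exacts [.inl (le_antisymm hy' h), .inr (le_antisymm hz' h)]

theorem extremePoints_segment (x y : E) : (segment 𝕜 x y).extremePoints 𝕜 = {x, y} := by
  rcases eq_or_ne x y with rfl | hxy
  · simp
  rw [segment_eq_image_lineMap, ← (AffineMap.lineMap_injective 𝕜 hxy).image_extremePoints,
    extremePoints_Icc (zero_le_one (α := 𝕜)), image_pair, AffineMap.lineMap_apply_zero,
    AffineMap.lineMap_apply_one]

end ExtremePoints

theorem IsCompact.exists_eq_segment_of_finrank_vectorSpan_eq_one
    {E : Type*} [AddCommGroup E] [Module ℝ E] [TopologicalSpace E] [IsTopologicalAddGroup E]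
    [ContinuousSMul ℝ E] [T2Space E] {F : Set E} (hcomp : IsCompact F) (hconv : Convex ℝ F)
    (hdim : finrank ℝ (vectorSpan ℝ F) = 1) : ∃ x y, x ≠ y ∧ F = segment ℝ x y := by
  obtain ⟨x, hx⟩ : F.Nonempty := by
    rw [nonempty_iff_ne_empty]
    rintro rfl
    rw [vectorSpan_empty, finrank_bot] at hdim
    exact zero_ne_one hdim
  obtain ⟨v, hv0, hv⟩ := finrank_eq_one_iff'.1 hdim
  set f : ℝ →ᵃ[ℝ] E := AffineMap.lineMap x (v + x)
  have hf : ⇑f = (· + x) ∘ (· • (v : E)) := by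
    ext t
    simp [f, AffineMap.lineMap_apply]
  have hFf : F ⊆ range f := fun y hy => by
    obtain ⟨c, hc⟩ := hv ⟨y -ᵥ x, vsub_mem_vectorSpan ℝ hy hx⟩
    have hc' : c • (v : E) = y - x := congrArg Subtype.val hc
    exact ⟨c, by simp [hf, hc']⟩
  have hf_emb : Topology.IsClosedEmbedding f :=
    hf ▸ (Homeomorph.addRight x).isClosedEmbedding.comp
      (isClosedEmbedding_smul_left (by simpa using hv0))
  have hTne : (f ⁻¹' F).Nonempty := ⟨0, by simpa [hf]⟩
  obtain ⟨a, b, hT⟩ : ∃ a b, f ⁻¹' F = Icc a b :=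
    ⟨_, _, eq_Icc_of_connected_compact ⟨hTne, (hconv.affine_preimage f).isPreconnected⟩
      (hf_emb.isCompact_preimage hcomp)⟩
  have hseg : F = segment ℝ (f a) (f b) := by
    rw [← image_preimage_eq_of_subset hFf, hT, ← segment_eq_Icc (nonempty_Icc.1 (hT ▸ hTne)),
      image_segment]
  refine ⟨_, _, fun h => ?_, hseg⟩
  rw [hseg, h, segment_same, vectorSpan_singleton] at hdim
  simp at hdim

theorem stmt_1_general (n : ℕ) (S : Set (Fin n → ℝ)) (hS : S.Finite)
    (P : Set (Fin n → ℝ)) (hP : P = convexHull ℝ S)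
    (F : Set (Fin n → ℝ))
    (hexp : IsExposed ℝ P F) (hdim : Module.finrank ℝ ↥(vectorSpan ℝ F) = 1) :
    ∃ V W : Fin n → ℝ, V ∈ Set.extremePoints ℝ P ∧ W ∈ Set.extremePoints ℝ P ∧
      V ≠ W ∧ F = segment ℝ V W ∧
      ∀ V' W' : Fin n → ℝ, V' ∈ Set.extremePoints ℝ P → W' ∈ Set.extremePoints ℝ P →
        V' ≠ W' → F = segment ℝ V' W' → ({V', W'} : Set (Fin n → ℝ)) = {V, W} := by
  subst hP
  have hFcomp : IsCompact F := hexp.isCompact (hS.isCompact_convexHull ℝ)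
  obtain ⟨V, W, hVW, rfl⟩ :=
    hFcomp.exists_eq_segment_of_finrank_vectorSpan_eq_one (hexp.convex (convex_convexHull ℝ S)) hdim
  have hext := hexp.isExtreme.extremePoints_subset_extremePoints
  rw [extremePoints_segment] at hext
  refine ⟨V, W, hext (mem_insert V {W}), hext (mem_insert_of_mem V rfl), hVW, rfl, ?_⟩
  intro V' W' _ _ _ hF
  rw [← extremePoints_segment (𝕜 := ℝ), ← hF, extremePoints_segment]

/-- Every edge of a polytope is the closed segment joining a unique pair of
distinct extreme points. -/
theorem stmt_1 (n : ℕ) (S : Set (Fin n → ℝ)) (hS : S.Finite)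
    (P : Set (Fin n → ℝ)) (hP : P = convexHull ℝ S)
    (F : Set (Fin n → ℝ)) (hne : F.Nonempty)
    (hexp : IsExposed ℝ P F) (hdim : Module.finrank ℝ ↥(vectorSpan ℝ F) = 1) :
    ∃ V W : Fin n → ℝ, V ∈ Set.extremePoints ℝ P ∧ W ∈ Set.extremePoints ℝ P ∧
      V ≠ W ∧ F = segment ℝ V W ∧
      ∀ V' W' : Fin n → ℝ, V' ∈ Set.extremePoints ℝ P → W' ∈ Set.extremePoints ℝ P →
        V' ≠ W' → F = segment ℝ V' W' → ({V', W'} : Set (Fin n → ℝ)) = {V, W} :=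
  stmt_1_general n S hS P hP F hexp hdim
end

section
/- Let S ⊆ (Fin n → ℝ) be finite, P = convexHull ℝ S, V an extreme point of P, and let Z₁, …, Z_k be the edge-neighbors of V. Then for every p ∈ P there exist nonnegative reals r₁, …, r_k such that p − V = ∑_{i=1}^k r_i • (Z_i − V). -/
/-- `Z` is an edge-neighbor of `V` in `P`: a vertex of `P` distinct from `V` such that the
closed segment `[V, Z]` is an edge (a nonempty exposed face of affine dimension 1) of `P`. -/
def EdgeNeighbor {n : ℕ} (P : Set (Fin n → ℝ)) (V Z : Fin n → ℝ) : Prop :=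
  Z ∈ Set.extremePoints ℝ P ∧ Z ≠ V ∧
    (segment ℝ V Z).Nonempty ∧ IsExposed ℝ P (segment ℝ V Z) ∧
    Module.finrank ℝ ↥(vectorSpan ℝ (segment ℝ V Z)) = 1

/-!
A vertex `V` of the polytope `P = conv S` is exposed: some functional `m` has `m V < m s` for
all other `s ∈ S`. Rescaling each `s - V` to the hyperplane `m = 1` gives the vertex figure, a
polytope whose vertices `e` span the same cone as `P - V`. Each such `e` is in turn exposed in the
vertex figure; the functional exposing it, corrected by a multiple of `m`, exposes a face of `P`
lying on the ray `V + ℝ≥0 e`, and a compact convex subset of a ray from `V` containing `V` is a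
segment `[V, Z]`. Hence every `e`, and with it all of `P - V`, lies in the cone spanned by the edge
directions `Z - V`.
-/

open Set

theorem AffineMap.image_extremePoints_subset {𝕜 E F : Type*} [Ring 𝕜] [PartialOrder 𝕜]
    [IsOrderedRing 𝕜] [AddCommGroup E] [Module 𝕜 E] [AddCommGroup F] [Module 𝕜 F] {f : E →ᵃ[𝕜] F}
    (hf : Function.Injective f) (A : Set E) :
    f '' A.extremePoints 𝕜 ⊆ (f '' A).extremePoints 𝕜 := by
  rintro _ ⟨x, hx, rfl⟩
  refine ⟨mem_image_of_mem f hx.1, ?_⟩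
  rintro _ ⟨y₁, hy₁, rfl⟩ _ ⟨y₂, hy₂, rfl⟩ hxy
  rw [← image_openSegment, hf.mem_set_image] at hxy
  exact congrArg f (hx.2 hy₁ hy₂ hxy)

theorem right_mem_extremePoints_segment {E : Type*} [AddCommGroup E] [Module ℝ E] {x y : E}
    (hxy : x ≠ y) : y ∈ (segment ℝ x y).extremePoints ℝ := by
  rw [segment_eq_image_lineMap]
  exact AffineMap.image_extremePoints_subset (AffineMap.lineMap_injective ℝ hxy) _
    ⟨1, by simp, by simp⟩

section Normed

variable {E : Type*} [NormedAddCommGroup E] [NormedSpace ℝ E]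

def IsExposedSegment (P : Set E) (V Z : E) : Prop :=
  Z ≠ V ∧ IsExposed ℝ P (segment ℝ V Z)

theorem exists_forall_lt_of_mem_extremePoints_convexHull {S : Set E} (hS : S.Finite) {x : E}
    (hx : x ∈ (convexHull ℝ S).extremePoints ℝ) :
    ∃ f : StrongDual ℝ E, ∀ y ∈ S, y ≠ x → f x < f y := by
  have hxS : x ∉ convexHull ℝ (S \ {x}) := fun h =>
    ((convex_convexHull ℝ S).mem_extremePoints_iff_mem_sdiff_convexHull_sdiff.1 hx).2
      (convexHull_mono (sdiff_subset_sdiff_left (subset_convexHull ℝ S)) h)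
  obtain ⟨f, u, hfx, hfu⟩ := geometric_hahn_banach_point_closed (convex_convexHull ℝ _)
    ((hS.subset sdiff_subset).isClosed_convexHull (𝕜 := ℝ)) hxS
  exact ⟨f, fun y hy hyx => hfx.trans (hfu y (subset_convexHull ℝ _ ⟨hy, hyx⟩))⟩

theorem convexHull_extremePoints_of_finite {A : Set E} (hA : IsCompact A) (hAc : Convex ℝ A)
    (hfin : (A.extremePoints ℝ).Finite) : convexHull ℝ (A.extremePoints ℝ) = A := by
  rw [← hfin.isClosed_convexHull (𝕜 := ℝ).closure_eq, closure_convexHull_extremePoints hA hAc]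

theorem IsExposed.subset_convexHull_inter {S F : Set E} (hS : S.Finite)
    (hF : IsExposed ℝ (convexHull ℝ S) F) : F ⊆ convexHull ℝ (S ∩ F) := by
  have hext : F.extremePoints ℝ ⊆ S ∩ F := fun x hx =>
    ⟨extremePoints_convexHull_subset (hF.isExtreme.extremePoints_subset_extremePoints hx), hx.1⟩
  calc F = convexHull ℝ (F.extremePoints ℝ) :=
        (convexHull_extremePoints_of_finite (hF.isCompact (hS.isCompact_convexHull (𝕜 := ℝ)))
          (hF.convex (convex_convexHull ℝ S)) ((hS.subset inter_subset_left).subset hext)).symm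
    _ ⊆ convexHull ℝ (S ∩ F) := convexHull_mono hext

theorem convex_setOf_sub_eq_smul (V e : E) (m : StrongDual ℝ E) :
    Convex ℝ {y : E | y - V = m (y - V) • e} := by
  intro x hx y hy a b ha hb hab
  have hsub : a • x + b • y - V = a • (x - V) + b • (y - V) := by
    linear_combination (norm := module) hab • V
  simp only [mem_ofPred_eq] at hx hy ⊢
  rw [hsub, map_add, map_smul, map_smul, smul_eq_mul, smul_eq_mul, add_smul, mul_smul,
    mul_smul, ← hx, ← hy]

theorem IsCompact.exists_eq_segment_of_forall_sub_eq_smul {F : Set E} (hF : IsCompact F)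
    (hFc : Convex ℝ F) {V e : E} (hV : V ∈ F) {m : StrongDual ℝ E}
    (hm : ∀ y ∈ F, m V ≤ m y) (he : ∀ y ∈ F, y - V = m (y - V) • e) :
    ∃ Z ∈ F, F = segment ℝ V Z := by
  obtain ⟨Z, hZ, hZmax⟩ := hF.exists_isMaxOn ⟨V, hV⟩ m.continuous.continuousOn
  have hline : ∀ y ∈ F, AffineMap.lineMap V (V + e) (m (y - V)) = y := fun y hy => by
    rw [AffineMap.lineMap_apply_module', add_sub_cancel_left, ← he y hy, sub_add_cancel]
  refine ⟨Z, hZ, (hFc.segment_subset hV hZ).antisymm' fun y hy => ?_⟩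
  have hseg : segment ℝ V Z =
      AffineMap.lineMap V (V + e) '' segment ℝ (m (V - V)) (m (Z - V)) := by
    rw [image_segment, hline V hV, hline Z hZ]
  rw [hseg, ← hline y hy]
  refine mem_image_of_mem _ ?_
  rw [segment_eq_Icc (by simpa using hm Z hZ)]
  simp only [sub_self, map_zero, map_sub]
  exact ⟨sub_nonneg.2 (hm y hy), sub_le_sub_right (hZmax hy) _⟩

theorem exists_isExposed_segment_of_maximizers_on_ray {S : Set E} (hS : S.Finite)
    {V s₀ e : E} (hVS : V ∈ S) (hs₀ : s₀ ∈ S) (hs₀V : s₀ ≠ V) {m g : StrongDual ℝ E}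
    (hm : ∀ s ∈ S, m V ≤ m s) (hg : ∀ s ∈ S, g s ≤ g V)
    (hge : ∀ s ∈ S, g s = g V → s - V = m (s - V) • e) (hgs₀ : g s₀ = g V) :
    ∃ Z, IsExposedSegment (convexHull ℝ S) V Z ∧ ∃ t : ℝ, 0 < t ∧ Z - V = t • e := by
  set P := convexHull ℝ S
  set F := {x ∈ P | ∀ y ∈ P, g y ≤ g x}
  have hFexp : IsExposed ℝ P F := fun _ => ⟨g, rfl⟩
  have hVP : V ∈ P := subset_convexHull ℝ S hVS
  have hVF : V ∈ F :=
    ⟨hVP, fun y hy => convexHull_min hg (convex_halfSpace_le g.toLinearMap.isLinear _) hy⟩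
  have hSF : ∀ s ∈ S ∩ F, s - V = m (s - V) • e := fun s hs =>
    hge s hs.1 ((hg s hs.1).antisymm (hs.2.2 V hVP))
  have hFray : ∀ y ∈ F, y - V = m (y - V) • e := fun y hy =>
    convexHull_min hSF (convex_setOf_sub_eq_smul V e m) (hFexp.subset_convexHull_inter hS hy)
  have hmF : ∀ y ∈ F, m V ≤ m y := fun y hy =>
    convexHull_min hm (convex_halfSpace_ge m.toLinearMap.isLinear _) hy.1
  obtain ⟨Z, hZF, hFZ⟩ :=
    (hFexp.isCompact (hS.isCompact_convexHull (𝕜 := ℝ))).exists_eq_segment_of_forall_sub_eq_smul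
      (hFexp.convex (convex_convexHull ℝ S)) hVF hmF hFray
  have hs₀F : s₀ ∈ segment ℝ V Z :=
    hFZ ▸ ⟨subset_convexHull ℝ S hs₀, fun y hy => hgs₀ ▸ hVF.2 y hy⟩
  have hZV : Z ≠ V := by
    rintro rfl
    exact hs₀V (by simpa using hs₀F)
  refine ⟨Z, ⟨hZV, hFZ ▸ hFexp⟩, m (Z - V), ?_, hFray Z hZF⟩
  refine (map_sub m Z V ▸ sub_nonneg.2 (hmF Z hZF)).lt_of_ne fun h => hZV ?_
  rw [← sub_eq_zero, hFray Z hZF, ← h, zero_smul]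

def vertexFigure (S : Set E) (V : E) (m : StrongDual ℝ E) : Set E :=
  convexHull ℝ ((fun s => (m (s - V))⁻¹ • (s - V)) '' (S \ {V}))

theorem exists_isExposed_segment_of_mem_extremePoints_vertexFigure {S : Set E} (hS : S.Finite)
    {V : E} (hVS : V ∈ S) {m : StrongDual ℝ E} (hm : ∀ s ∈ S, s ≠ V → m V < m s) {e : E}
    (he : e ∈ (vertexFigure S V m).extremePoints ℝ) :
    ∃ Z, IsExposedSegment (convexHull ℝ S) V Z ∧ ∃ t : ℝ, 0 < t ∧ Z - V = t • e := by
  set u : E → E := fun s => (m (s - V))⁻¹ • (s - V)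
  have hpos : ∀ s ∈ S, s ≠ V → 0 < m (s - V) := fun s hs hsV => by
    rw [map_sub, sub_pos]; exact hm s hs hsV
  have hsu : ∀ s ∈ S, s ≠ V → s - V = m (s - V) • u s := fun s hs hsV =>
    (smul_inv_smul₀ (hpos s hs hsV).ne' _).symm
  have hmu : ∀ s ∈ S, s ≠ V → m (u s) = 1 := fun s hs hsV => by
    simp only [u, map_smul, smul_eq_mul, inv_mul_cancel₀ (hpos s hs hsV).ne']
  obtain ⟨s₀, ⟨hs₀, hs₀V⟩, rfl⟩ := extremePoints_convexHull_subset he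
  obtain ⟨f, hf⟩ := exists_forall_lt_of_mem_extremePoints_convexHull ((hS.sdiff).image u) he
  have hfu : ∀ s ∈ S, s ≠ V → u s ≠ u s₀ → f (u s₀) < f (u s) := fun s hs hsV =>
    hf (u s) ⟨s, ⟨hs, hsV⟩, rfl⟩
  -- `g` vanishes at `u s₀` and is negative at the other generators, all of which have `m = 1`.
  set g : StrongDual ℝ E := f (u s₀) • m - f
  have hgu : ∀ s ∈ S, s ≠ V → g s - g V = m (s - V) * (f (u s₀) - f (u s)) := fun s hs hsV =>
    calc g s - g V = g (m (s - V) • u s) := by rw [← map_sub, ← hsu s hs hsV]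
      _ = m (s - V) * (f (u s₀) - f (u s)) := by
        simp only [g, map_smul, sub_apply, smul_apply, hmu s hs hsV, smul_eq_mul, mul_one]
  refine exists_isExposed_segment_of_maximizers_on_ray hS hVS hs₀ hs₀V (m := m) (g := g)
    ?_ ?_ ?_ ?_
  · intro s hs
    rcases eq_or_ne s V with rfl | hsV
    exacts [le_rfl, (hm s hs hsV).le]
  · intro s hs
    rcases eq_or_ne s V with rfl | hsV
    · exact le_rfl
    refine sub_nonpos.1 (hgu s hs hsV ▸ mul_nonpos_of_nonneg_of_nonpos (hpos s hs hsV).le ?_)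
    rcases eq_or_ne (u s) (u s₀) with h | h
    · rw [h, sub_self]
    · exact (sub_neg.2 (hfu s hs hsV h)).le
  · intro s hs hgs
    rcases eq_or_ne s V with rfl | hsV
    · simp
    have hus : u s = u s₀ := by
      by_contra h
      have := hgu s hs hsV
      rw [hgs, sub_self] at this
      exact (mul_neg_of_pos_of_neg (hpos s hs hsV) (sub_neg.2 (hfu s hs hsV h))).ne this.symm
    exact (hsu s hs hsV).trans (by rw [hus])
  · simpa [sub_eq_zero] using hgu s₀ hs₀ hs₀V

theorem sub_mem_hull_edge_directions {S : Set E} (hS : S.Finite) {V p : E}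
    (hV : V ∈ (convexHull ℝ S).extremePoints ℝ) (hp : p ∈ convexHull ℝ S) :
    p - V ∈ PointedCone.hull ℝ ((· - V) '' {Z | IsExposedSegment (convexHull ℝ S) V Z}) := by
  set K := PointedCone.hull ℝ ((· - V) '' {Z | IsExposedSegment (convexHull ℝ S) V Z})
  have hVS : V ∈ S := extremePoints_convexHull_subset hV
  obtain ⟨m, hm⟩ := exists_forall_lt_of_mem_extremePoints_convexHull hS hV
  have hT : ((fun s => (m (s - V))⁻¹ • (s - V)) '' (S \ {V})).Finite := (hS.sdiff).image _
  have hfigK : vertexFigure S V m ⊆ K := by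
    rw [vertexFigure, ← convexHull_extremePoints_of_finite (hT.isCompact_convexHull (𝕜 := ℝ))
      (convex_convexHull ℝ _) (hT.subset extremePoints_convexHull_subset)]
    refine convexHull_min (fun e he => ?_) K.convex
    obtain ⟨Z, hZ, t, ht, hZe⟩ :=
      exists_isExposed_segment_of_mem_extremePoints_vertexFigure hS hVS hm he
    rw [← inv_smul_smul₀ ht.ne' e, ← hZe]
    exact K.smul_mem (inv_nonneg.2 ht.le) (PointedCone.subset_hull ⟨Z, hZ, rfl⟩)
  have hSK : S ⊆ (· - V) ⁻¹' K := fun s hs => by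
    rcases eq_or_ne s V with rfl | hsV
    · simp
    have hpos : 0 < m (s - V) := by rw [map_sub, sub_pos]; exact hm s hs hsV
    rw [mem_preimage, ← smul_inv_smul₀ hpos.ne' (s - V)]
    exact K.smul_mem hpos.le (hfigK (subset_convexHull ℝ _ ⟨s, ⟨hs, hsV⟩, rfl⟩))
  have hKV : Convex ℝ ((· - V) ⁻¹' (K : Set E)) := by
    simpa only [sub_eq_add_neg] using K.convex.translate_preimage_left (-V)
  exact convexHull_min hSK hKV hp

end Normed

theorem exists_finsupp_of_mem_hull_image_sub {E : Type*} [AddCommGroup E] [Module ℝ E]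
    {A : Set E} {V x : E} (hx : x ∈ PointedCone.hull ℝ ((· - V) '' A)) :
    ∃ r : E →₀ ℝ, (∀ Z, 0 ≤ r Z) ∧ (∀ Z ∈ r.support, Z ∈ A) ∧
      x = r.sum (fun Z c => c • (Z - V)) := by
  classical
  obtain ⟨c, hcA, hc0, rfl⟩ := PointedCone.mem_hull_set.1 hx
  refine ⟨c.mapDomain (· + V), fun Z => ?_, fun Z hZ => ?_, ?_⟩
  · rw [← sub_add_cancel Z V, Finsupp.mapDomain_apply (add_left_injective V)]
    exact hc0 _
  · obtain ⟨_, hy, rfl⟩ := Finset.mem_image.1 (Finsupp.mapDomain_support hZ)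
    obtain ⟨W, hW, rfl⟩ := hcA hy
    simpa using hW
  · rw [Finsupp.sum_mapDomain_index (h := fun Z c => c • (Z - V)) (fun _ => zero_smul ℝ _)
      (fun _ _ _ => add_smul _ _ _)]
    simp only [add_sub_cancel_right]

theorem IsExposedSegment.edgeNeighbor {n : ℕ} {P : Set (Fin n → ℝ)} {V Z : Fin n → ℝ}
    (h : IsExposedSegment P V Z) : EdgeNeighbor P V Z :=
  have ⟨hZV, h⟩ := h
  ⟨h.isExtreme.extremePoints_subset_extremePoints (right_mem_extremePoints_segment hZV.symm),
    hZV, ⟨V, left_mem_segment ℝ V Z⟩, h,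
    by rw [vectorSpan_segment, finrank_span_singleton (vsub_ne_zero.2 hZV)]⟩

/-- For a vertex `V` of a polytope `P`, every `p ∈ P` has `p − V` a nonnegative
combination of the vectors `Z − V` where `Z` ranges over the edge-neighbors of `V`. -/
theorem stmt_2 (n : ℕ) (S : Set (Fin n → ℝ)) (hS : S.Finite)
    (P : Set (Fin n → ℝ)) (hP : P = convexHull ℝ S)
    (V : Fin n → ℝ) (hV : V ∈ Set.extremePoints ℝ P)
    (p : Fin n → ℝ) (hp : p ∈ P) :
    ∃ r : (Fin n → ℝ) →₀ ℝ, (∀ Z, 0 ≤ r Z) ∧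
      (∀ Z ∈ r.support, EdgeNeighbor P V Z) ∧
      p - V = r.sum (fun Z c => c • (Z - V)) := by
  subst hP
  obtain ⟨r, hr0, hrA, hr⟩ :=
    exists_finsupp_of_mem_hull_image_sub (sub_mem_hull_edge_directions hS hV hp)
  exact ⟨r, hr0, fun Z hZ => (hrA Z hZ).edgeNeighbor, hr⟩
end

section
/- Let S ⊆ (Fin n → ℝ) be finite, P = convexHull ℝ S, V an extreme point of P, and Z an edge-neighbor of V. Then Z − V cannot be written as a nonnegative linear combination of the other vertex vectors at V: there is no finitely supported family of nonnegative reals (r_W), indexed by the extreme points W of P with W ≠ V and W ≠ Z, such that Z − V = ∑_W r_W • (W − V). -/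
section

variable {𝕜 E : Type*} [Ring 𝕜] [LinearOrder 𝕜] [IsStrictOrderedRing 𝕜] [AddCommGroup E]
  [Module 𝕜 E] {r : E →₀ 𝕜} {V : E}

theorem LinearMap.eq_of_map_finsuppSum_smul_sub_eq_zero (l : E →ₗ[𝕜] 𝕜) (hr : ∀ W, 0 ≤ r W)
    (hle : ∀ W ∈ r.support, l W ≤ l V) (hzero : l (r.sum fun W c => c • (W - V)) = 0) :
    ∀ W ∈ r.support, l W = l V := by
  have hterm : ∀ W ∈ r.support, r W * (l W - l V) ≤ 0 := fun W hW =>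
    mul_nonpos_of_nonneg_of_nonpos (hr W) (sub_nonpos.2 (hle W hW))
  have hsum : ∑ W ∈ r.support, r W * (l W - l V) = 0 := by
    simpa only [Finsupp.sum, map_sum, map_smul, map_sub, smul_eq_mul] using hzero
  intro W hW
  have hprod := (Finset.sum_eq_zero_iff_of_nonpos hterm).1 hsum W hW
  exact sub_eq_zero.1 ((mul_eq_zero.1 hprod).resolve_left (Finsupp.mem_support_iff.1 hW))

variable [TopologicalSpace 𝕜] [TopologicalSpace E] {A F : Set E} {Z : E}

theorem IsExposed.mem_of_sub_eq_finsuppSum_smul_sub (hF : IsExposed 𝕜 A F) (hV : V ∈ F)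
    (hZ : Z ∈ F) (hr : ∀ W, 0 ≤ r W) (hrA : ∀ W ∈ r.support, W ∈ A)
    (hZV : Z - V = r.sum fun W c => c • (W - V)) : ∀ W ∈ r.support, W ∈ F := by
  obtain ⟨l, rfl⟩ := hF ⟨V, hV⟩
  have hlZV : l Z = l V := le_antisymm (hV.2 Z hZ.1) (hZ.2 V hV.1)
  have hzero : (l : E →ₗ[𝕜] 𝕜) (r.sum fun W c => c • (W - V)) = 0 := by
    simp only [ContinuousLinearMap.coe_coe, ← hZV, map_sub, hlZV, sub_self]
  intro W hW
  have hlW := (l : E →ₗ[𝕜] 𝕜).eq_of_map_finsuppSum_smul_sub_eq_zero hr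
    (fun W hW => hV.2 W (hrA W hW)) hzero W hW
  exact ⟨hrA W hW, fun y hy => (hV.2 y hy).trans_eq (by simpa using hlW.symm)⟩

end

theorem stmt_3_general (n : ℕ) (P : Set (Fin n → ℝ)) (V : Fin n → ℝ) (Z : Fin n → ℝ)
    (hZ : EdgeNeighbor P V Z) :
    ¬ ∃ r : (Fin n → ℝ) →₀ ℝ, (∀ W, 0 ≤ r W) ∧
        (∀ W ∈ r.support, W ∈ Set.extremePoints ℝ P ∧ W ≠ V ∧ W ≠ Z) ∧
        Z - V = r.sum (fun W c => c • (W - V)) := by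
  rintro ⟨r, hr, hrP, hZV⟩
  obtain ⟨-, hZ_ne, -, hedge, -⟩ := hZ
  have hVseg := left_mem_segment ℝ V Z
  have hZseg := right_mem_segment ℝ V Z
  have hsupp : r.support = ∅ := Finset.eq_empty_of_forall_notMem fun W hW => by
    obtain ⟨hWext, hWV, hWZ⟩ := hrP W hW
    have hWseg := hedge.mem_of_sub_eq_finsuppSum_smul_sub hVseg hZseg hr
      (fun W hW => (hrP W hW).1.1) hZV W hW
    rcases (mem_extremePoints_iff_forall_segment.1 hWext).2 V (hedge.subset hVseg) Z
      (hedge.subset hZseg) hWseg with h | h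
    exacts [hWV h.symm, hWZ h.symm]
  rw [Finsupp.sum, hsupp, Finset.sum_empty, sub_eq_zero] at hZV
  exact hZ_ne hZV

/-- If `Z` is an edge-neighbor of the vertex `V` of a polytope `P`, then `Z − V`
is not a nonnegative linear combination of the other vertex vectors at `V`. -/
theorem stmt_3 (n : ℕ) (S : Set (Fin n → ℝ)) (hS : S.Finite)
    (P : Set (Fin n → ℝ)) (hP : P = convexHull ℝ S)
    (V : Fin n → ℝ) (hV : V ∈ Set.extremePoints ℝ P)
    (Z : Fin n → ℝ) (hZ : EdgeNeighbor P V Z) :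
    ¬ ∃ r : (Fin n → ℝ) →₀ ℝ, (∀ W, 0 ≤ r W) ∧
        (∀ W ∈ r.support, W ∈ Set.extremePoints ℝ P ∧ W ≠ V ∧ W ≠ Z) ∧
        Z - V = r.sum (fun W c => c • (W - V)) :=
  stmt_3_general n P V Z hZ
end

section
/- Let S ⊆ (Fin n → ℝ) be finite, P = convexHull ℝ S, V an extreme point of P, K_V the convex cone generated by the vertex vectors at V, and Z an edge-neighbor of V. Then the ray R = {t • (Z − V) : t ∈ ℝ, t ≥ 0} is an extreme subset of K_V (Mathlib's IsExtreme ℝ K_V R): R ⊆ K_V and whenever x, y ∈ K_V and the open segment between x and y meets R, both x and y lie in R. -/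
/-- The convex cone `K_V` generated by the vertex vectors at `V`: all finite nonnegative
combinations `∑_W r_W • (W − V)`, `W` ranging over the extreme points of `P` other than `V`. -/
def Kcone {n : ℕ} (P : Set (Fin n → ℝ)) (V : Fin n → ℝ) : Set (Fin n → ℝ) :=
  {x | ∃ r : (Fin n → ℝ) →₀ ℝ, (∀ W, 0 ≤ r W) ∧
    (∀ W ∈ r.support, W ∈ Set.extremePoints ℝ P ∧ W ≠ V) ∧
    x = r.sum (fun W c => c • (W - V))}

theorem map_finsuppSum_smul_sub {E : Type*} [AddCommGroup E] [Module ℝ E] (l : E →ₗ[ℝ] ℝ)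
    (r : E →₀ ℝ) (V : E) :
    l (r.sum fun W c => c • (W - V)) = r.sum fun W c => c * (l W - l V) := by
  simp only [map_finsuppSum, map_smul, map_sub, smul_eq_mul]

theorem IsExposed.exists_dual_of_segment {E : Type*} [AddCommGroup E] [Module ℝ E]
    [TopologicalSpace E] {P : Set E} {V Z : E}
    (h : IsExposed ℝ P (segment ℝ V Z)) :
    ∃ l : StrongDual ℝ E, (∀ y ∈ P, l y ≤ l V) ∧ l Z = l V ∧
      ∀ W ∈ P.extremePoints ℝ, W ≠ V → W ≠ Z → l W < l V := by
  obtain ⟨l, hl⟩ := h ⟨V, left_mem_segment ℝ V Z⟩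
  have hV := left_mem_segment ℝ V Z
  have hZ := right_mem_segment ℝ V Z
  rw [hl] at hV hZ
  refine ⟨l, hV.2, le_antisymm (hV.2 Z hZ.1) (hZ.2 V hV.1), fun W hW hWV hWZ => ?_⟩
  refine (hV.2 W hW.1).lt_of_ne fun hWl => ?_
  have hWseg : W ∈ segment ℝ V Z := by
    rw [hl]
    exact ⟨hW.1, fun y hy => hWl ▸ hV.2 y hy⟩
  rcases (mem_extremePoints_iff_forall_segment.mp hW).2 V hV.1 Z hZ.1 hWseg with h | h
  exacts [hWV h.symm, hWZ h.symm]

section Kcone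

variable {n : ℕ} {P : Set (Fin n → ℝ)} {V Z : Fin n → ℝ}

theorem smul_sub_mem_Kcone (hZ : Z ∈ P.extremePoints ℝ) (hZV : Z ≠ V) {t : ℝ} (ht : 0 ≤ t) :
    t • (Z - V) ∈ Kcone P V := by
  refine ⟨Finsupp.single Z t, fun W => ?_, fun W hW => ?_, ?_⟩
  · rw [Finsupp.single_apply]
    split_ifs
    exacts [ht, le_rfl]
  · rw [Finset.mem_singleton.mp (Finsupp.support_single_subset hW)]
    exact ⟨hZ, hZV⟩
  · rw [Finsupp.sum_single_index (by simp)]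

theorem apply_nonpos_of_mem_Kcone {l : (Fin n → ℝ) →ₗ[ℝ] ℝ} (hl : ∀ y ∈ P, l y ≤ l V)
    {x : Fin n → ℝ} (hx : x ∈ Kcone P V) : l x ≤ 0 := by
  obtain ⟨r, hr, hrP, rfl⟩ := hx
  rw [map_finsuppSum_smul_sub]
  exact Finset.sum_nonpos fun W hW =>
    mul_nonpos_of_nonneg_of_nonpos (hr W) (sub_nonpos.mpr (hl W (hrP W hW).1.1))

theorem exists_smul_sub_of_mem_Kcone_of_apply_eq_zero {l : (Fin n → ℝ) →ₗ[ℝ] ℝ}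
    (hl : ∀ y ∈ P, l y ≤ l V) (hlt : ∀ W ∈ P.extremePoints ℝ, W ≠ V → W ≠ Z → l W < l V)
    {x : Fin n → ℝ} (hx : x ∈ Kcone P V) (hx0 : l x = 0) :
    ∃ t : ℝ, 0 ≤ t ∧ x = t • (Z - V) := by
  obtain ⟨r, hr, hrP, rfl⟩ := hx
  rw [map_finsuppSum_smul_sub, Finsupp.sum] at hx0
  have hterm := (Finset.sum_eq_zero_iff_of_nonpos fun W hW =>
    mul_nonpos_of_nonneg_of_nonpos (hr W) (sub_nonpos.mpr (hl W (hrP W hW).1.1))).mp hx0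
  have hsupp : r.support ⊆ {Z} := fun W hW => by
    by_contra hWZ
    obtain ⟨hW', hWV⟩ := hrP W hW
    rcases mul_eq_zero.mp (hterm W hW) with h | h
    · exact Finsupp.mem_support_iff.mp hW h
    · exact (sub_ne_zero.mpr (hlt W hW' hWV (by simpa using hWZ)).ne) h
  refine ⟨r Z, hr Z, ?_⟩
  rw [Finsupp.support_subset_singleton.mp hsupp, Finsupp.sum_single_index (by simp),
    Finsupp.single_eq_same]

end Kcone

theorem stmt_4_general (n : ℕ) (P : Set (Fin n → ℝ)) (V : Fin n → ℝ)
    (Z : Fin n → ℝ) (hZ : EdgeNeighbor P V Z) :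
    IsExtreme ℝ (Kcone P V) {x : Fin n → ℝ | ∃ t : ℝ, 0 ≤ t ∧ x = t • (Z - V)} := by
  obtain ⟨hZP, hZV, -, hedge, -⟩ := hZ
  obtain ⟨l, hle, hlZ, hlt⟩ := hedge.exists_dual_of_segment
  have hK : ∀ x ∈ Kcone P V, l x ≤ 0 := fun _ =>
    apply_nonpos_of_mem_Kcone (l := l.toLinearMap) hle
  suffices {x | ∃ t : ℝ, 0 ≤ t ∧ x = t • (Z - V)} = l.toExposed (Kcone P V) from
    this ▸ ContinuousLinearMap.toExposed.isExposed.isExtreme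
  ext x
  constructor
  · rintro ⟨t, ht, rfl⟩
    have hl0 : l (t • (Z - V)) = 0 := by simp [hlZ]
    exact ⟨smul_sub_mem_Kcone hZP hZV ht, fun y hy => hl0 ▸ hK y hy⟩
  · rintro ⟨hx, hmax⟩
    have h0 : (0 : Fin n → ℝ) ∈ Kcone P V := by simpa using smul_sub_mem_Kcone hZP hZV le_rfl
    exact exists_smul_sub_of_mem_Kcone_of_apply_eq_zero (l := l.toLinearMap) hle hlt hx
      (le_antisymm (hK x hx) (by simpa using hmax 0 h0))

/-- If `Z` is an edge-neighbor of the vertex `V` of a polytope `P`, then the ray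
spanned by `Z − V` is an extreme subset of the cone `K_V`. -/
theorem stmt_4 (n : ℕ) (S : Set (Fin n → ℝ)) (hS : S.Finite)
    (P : Set (Fin n → ℝ)) (hP : P = convexHull ℝ S)
    (V : Fin n → ℝ) (hV : V ∈ Set.extremePoints ℝ P)
    (Z : Fin n → ℝ) (hZ : EdgeNeighbor P V Z) :
    IsExtreme ℝ (Kcone P V) {x : Fin n → ℝ | ∃ t : ℝ, 0 ≤ t ∧ x = t • (Z - V)} :=
  stmt_4_general n P V Z hZ
end

section
/- Let S ⊆ (Fin n → ℝ) be finite and nonempty, P = convexHull ℝ S, and a, E : Fin n → ℝ. Define ω : ℝ → ℝ by ω(α) = sInf {E·p | p ∈ P ∧ a·p = α}. Then ω is convex on the set {a·p | p ∈ P}, i.e. ConvexOn ℝ ((fun p => a·p) '' P) ω holds. -/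
/-!
Two points `p, q` of `K` minimising `g` over the fibres of `f` above `x` and `y` (they exist by
compactness) combine to the point `t • p + s • q` of `K`, which lies in the fibre above
`t • x + s • y` because `f` is linear; so the minimum over that fibre is at most
`g (t • p + s • q) ≤ t • g p + s • g q`.
-/

section FiberInf

variable {E F : Type*} [TopologicalSpace E] [TopologicalSpace F]

theorem IsCompact.exists_mem_fiber_sInf_image_eq [T1Space F] {K : Set E} (hK : IsCompact K)
    {f : E → F} (hf : Continuous f) {g : E → ℝ} (hg : ContinuousOn g K) {α : F}
    (hα : α ∈ f '' K) : ∃ p ∈ K ∩ f ⁻¹' {α}, g p = sInf (g '' (K ∩ f ⁻¹' {α})) := by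
  have hfiber : IsCompact (K ∩ f ⁻¹' {α}) := hK.inter_right (isClosed_singleton.preimage hf)
  obtain ⟨p, hpK, hfp⟩ := hα
  exact ((hfiber.image_of_continuousOn (hg.mono Set.inter_subset_left)).sInf_mem
    ⟨g p, p, ⟨hpK, hfp⟩, rfl⟩)

variable [AddCommGroup E] [Module ℝ E] [AddCommGroup F] [Module ℝ F] [T1Space F]

theorem ConvexOn.sInf_image_fiber {K : Set E} (hK : IsCompact K) (hKc : Convex ℝ K)
    (f : E →ₗ[ℝ] F) (hf : Continuous f) {g : E → ℝ} (hg : ConvexOn ℝ K g)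
    (hgc : ContinuousOn g K) :
    ConvexOn ℝ (f '' K) fun α => sInf (g '' (K ∩ f ⁻¹' {α})) := by
  refine ⟨hKc.linear_image f, fun x hx y hy t s ht hs hts => ?_⟩
  obtain ⟨p, ⟨hpK, hfp⟩, hgp⟩ := hK.exists_mem_fiber_sInf_image_eq hf hgc hx
  obtain ⟨q, ⟨hqK, hfq⟩, hgq⟩ := hK.exists_mem_fiber_sInf_image_eq hf hgc hy
  have hr : t • p + s • q ∈ K ∩ f ⁻¹' {t • x + s • y} := by
    refine ⟨hKc hpK hqK ht hs hts, ?_⟩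
    simp only [Set.mem_preimage, Set.mem_singleton_iff] at hfp hfq ⊢
    rw [map_add, map_smul, map_smul, hfp, hfq]
  have hbdd : BddBelow (g '' (K ∩ f ⁻¹' {t • x + s • y})) :=
    ((hK.inter_right (isClosed_singleton.preimage hf)).image_of_continuousOn
      (hgc.mono Set.inter_subset_left)).bddBelow
  calc sInf (g '' (K ∩ f ⁻¹' {t • x + s • y})) ≤ g (t • p + s • q) :=
        csInf_le hbdd ⟨_, hr, rfl⟩
    _ ≤ t • g p + s • g q := hg.2 hpK hqK ht hs hts
    _ = _ := by rw [hgp, hgq]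

end FiberInf

theorem stmt_5_general (n : ℕ) (S : Set (Fin n → ℝ)) (hSf : S.Finite)
    (P : Set (Fin n → ℝ)) (hP : P = convexHull ℝ S)
    (a E : Fin n → ℝ) (ω : ℝ → ℝ)
    (hω : ∀ α : ℝ,
      ω α = sInf {e : ℝ | ∃ p ∈ P, (∑ i, a i * p i) = α ∧ e = ∑ i, E i * p i}) :
    ConvexOn ℝ ((fun p => ∑ i, a i * p i) '' P) ω := by
  let f := dotProductBilin ℝ ℝ a
  let g := dotProductBilin ℝ ℝ E
  have hω' : ω = fun α => sInf (g '' (P ∩ f ⁻¹' {α})) := by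
    ext α
    rw [hω]
    congr 1
    ext e
    exact ⟨fun ⟨p, hp, hfp, he⟩ => ⟨p, ⟨hp, hfp⟩, he.symm⟩,
      fun ⟨p, ⟨hp, hfp⟩, he⟩ => ⟨p, hp, hfp, he.symm⟩⟩
  subst hP
  rw [hω']
  exact ConvexOn.sInf_image_fiber (hSf.isCompact_convexHull (𝕜 := ℝ)) (convex_convexHull ℝ S) f
    f.continuous_of_finiteDimensional (g.convexOn (convex_convexHull ℝ S))
    g.continuous_of_finiteDimensional.continuousOn

/-- The minimal cost function `ω(α) = inf {E·p | p ∈ P, a·p = α}` of a polytope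
`P` is convex on the set of attainable target values `{a·p | p ∈ P}`. -/
theorem stmt_5 (n : ℕ) (S : Set (Fin n → ℝ)) (hSf : S.Finite) (hSn : S.Nonempty)
    (P : Set (Fin n → ℝ)) (hP : P = convexHull ℝ S)
    (a E : Fin n → ℝ) (ω : ℝ → ℝ)
    (hω : ∀ α : ℝ,
      ω α = sInf {e : ℝ | ∃ p ∈ P, (∑ i, a i * p i) = α ∧ e = ∑ i, E i * p i}) :
    ConvexOn ℝ ((fun p => ∑ i, a i * p i) '' P) ω :=
  stmt_5_general n S hSf P hP a E ω hω
end

section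
/- Let S ⊆ (Fin n → ℝ) be finite, P = convexHull ℝ S, a, E : Fin n → ℝ, and let V be a cost-optimal extreme point of P. Assume the sets N₊ and N₋ of edge-neighbors of V that respectively increase and decrease the target are both nonempty, and let γ⁺min and γ⁻max be as defined. Then: (i) for every p ∈ P with a·p > a·V one has (E·p − E·V)/(a·p − a·V) ≥ γ⁺min; (ii) γ⁺min ≥ γ⁻max; and (iii) for every p ∈ P with a·p < a·V one has (E·p − E·V)/(a·p − a·V) ≤ γ⁻max. -/
/-- The dot product `a·p = ∑ i, a i * p i`. -/
def dot {n : ℕ} (a p : Fin n → ℝ) : ℝ := ∑ i, a i * p i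

/-!
Put `f = μ • a - E` for `γ⁻max ≤ μ ≤ γ⁺min`. No edge-neighbor `Z` of `V` has `f V < f Z`: when
`a·Z ≠ a·V` this is the gradient bound defining `γ⁺min` or `γ⁻max`, otherwise cost-optimality.
By the optimality criterion of the simplex method, `f ≤ f V` on all of `P`; with `μ = γ⁺min` and
`μ = γ⁻max` this is (i) and (iii). The criterion is proved by descending from `P` through exposed
faces of strictly smaller dimension, each containing `V` and a point where `f` exceeds `f V`,
until an edge is reached; for a polytope an exposed face of an exposed face is again exposed.
The inequality `γ⁻max ≤ γ⁺min` needed for the choice of `μ` is cost-optimality at the point of the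
segment between the two extremal neighbors that lies on the level `a·p = a·V`.
-/

open Module Set Topology

theorem sub_eq_smul_of_finrank_vectorSpan_eq_one {K E : Type*} [Field K] [AddCommGroup E]
    [Module K E] {P : Set E} (hP : finrank K (vectorSpan K P) = 1) (f : E →ₗ[K] K)
    {x y z : E} (hx : x ∈ P) (hy : y ∈ P) (hz : z ∈ P) (hxy : f x ≠ f y) :
    z - x = ((f z - f x) / (f y - f x)) • (y - x) := by
  have hyx : y - x ≠ 0 := fun h => hxy (by rw [sub_eq_zero.1 h])
  obtain ⟨c, hc⟩ := (finrank_eq_one_iff_of_nonzero'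
    (⟨y - x, vsub_mem_vectorSpan K hy hx⟩ : vectorSpan K P) (by simpa using hyx)).1 hP
    ⟨z - x, vsub_mem_vectorSpan K hz hx⟩
  have hc' : c • (y - x) = z - x := congrArg Subtype.val hc
  have hcf : c = (f z - f x) / (f y - f x) := by
    rw [eq_div_iff (sub_ne_zero.2 hxy.symm), ← map_sub, ← map_sub, ← smul_eq_mul, ← map_smul, hc']
  rw [← hcf, hc']

theorem finrank_vectorSpan_lt_of_apply_eq {E : Type*} [AddCommGroup E] [Module ℝ E]
    [FiniteDimensional ℝ E] {G P : Set E} (l : E →ₗ[ℝ] ℝ) (hGP : G ⊆ P)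
    (hG : ∀ x ∈ G, ∀ y ∈ G, l x = l y) {x y : E} (hx : x ∈ P) (hy : y ∈ P) (hxy : l x ≠ l y) :
    finrank ℝ (vectorSpan ℝ G) < finrank ℝ (vectorSpan ℝ P) := by
  have hle : vectorSpan ℝ G ≤ vectorSpan ℝ P ⊓ LinearMap.ker l := by
    refine le_inf (vectorSpan_mono ℝ hGP) ?_
    rw [vectorSpan_def, Submodule.span_le]
    rintro _ ⟨z, hz, w, hw, rfl⟩
    simp [hG z hz w hw]
  have hlt : vectorSpan ℝ P ⊓ LinearMap.ker l < vectorSpan ℝ P :=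
    inf_lt_left.2 fun h => hxy (sub_eq_zero.1 (by simpa using h (vsub_mem_vectorSpan ℝ hx hy)))
  exact (Submodule.finrank_mono hle).trans_lt (Submodule.finrank_lt_finrank_of_lt hlt)

theorem exists_apply_eq_apply_lt_of_two_le_finrank {E : Type*} [NormedAddCommGroup E]
    [NormedSpace ℝ E] [FiniteDimensional ℝ E] {S : Set E} {V : E} (hV : V ∈ S)
    (hS : 2 ≤ finrank ℝ (vectorSpan ℝ S)) :
    ∃ h : E →L[ℝ] ℝ, (∃ s ∈ S, s ≠ V ∧ h s = h V) ∧ ∃ b ∈ S, h V < h b := by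
  obtain ⟨s, hs, hsV⟩ : ∃ s ∈ S, s ≠ V := by
    refine (not_subsingleton_iff.1 fun hsub => ?_).exists_ne V
    rw [Submodule.finrank_eq_zero.2 ((vectorSpan_eq_bot_iff_subsingleton ℝ).2 hsub)] at hS
    omega
  obtain ⟨b, hb, hbs⟩ : ∃ b ∈ S, b - V ∉ Submodule.span ℝ {s - V} := by
    by_contra! hall
    have hle : vectorSpan ℝ S ≤ Submodule.span ℝ {s - V} := by
      rw [vectorSpan_eq_span_vsub_set_right ℝ hV, Submodule.span_le]
      rintro _ ⟨y, hy, rfl⟩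
      exact hall y hy
    have := (Submodule.finrank_mono hle).trans (finrank_span_singleton (sub_ne_zero.2 hsV)).le
    omega
  obtain ⟨φ, hφb, hφs⟩ := Submodule.exists_dual_map_eq_bot_of_notMem hbs inferInstance
  have hφs' : φ (s - V) = 0 := by
    simpa [hφs] using Submodule.mem_map_of_mem (f := φ) (Submodule.mem_span_singleton_self (s - V))
  set h : E →L[ℝ] ℝ := (φ (b - V))⁻¹ • LinearMap.toContinuousLinearMap φ
  have hh : ∀ y, h y - h V = (φ (b - V))⁻¹ * φ (y - V) := fun y => by
    simp [h, map_sub, mul_sub]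
  refine ⟨h, ⟨s, hs, hsV, ?_⟩, b, hb, ?_⟩
  · simpa [hφs', sub_eq_zero] using hh s
  · have := hh b
    rw [inv_mul_cancel₀ hφb] at this
    linarith

theorem slope_le_slope_of_forall_le {X : Type*} [AddCommGroup X] [Module ℝ X] {P : Set X}
    (hP : Convex ℝ P) (A C : X →ₗ[ℝ] ℝ) {V Zm Zp : X}
    (hopt : ∀ p ∈ P, A p = A V → C V ≤ C p) (hZm : Zm ∈ P) (hZp : Zp ∈ P)
    (hm : A Zm < A V) (hp : A V < A Zp) :
    (C Zm - C V) / (A Zm - A V) ≤ (C Zp - C V) / (A Zp - A V) := by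
  set α := A Zp - A V
  set β := A V - A Zm
  have hα : 0 < α := sub_pos.2 hp
  have hβ : 0 < β := sub_pos.2 hm
  -- the point of `[Zm, Zp]` on the level set `A = A V`
  set p := (α / (α + β)) • Zm + (β / (α + β)) • Zp
  have hpP : p ∈ P := hP hZm hZp (by positivity) (by positivity) (by field_simp)
  have hCp : C p = (α * C Zm + β * C Zp) / (α + β) := by
    simp only [p, map_add, map_smul, smul_eq_mul]
    field_simp
  have hAp : A p = A V := by
    simp only [p, map_add, map_smul, smul_eq_mul]
    field_simp
    ring
  have hCV := hopt p hpP hAp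
  rw [hCp, le_div_iff₀ (by positivity)] at hCV
  rw [show A Zm - A V = -β by ring, div_neg, neg_le, ← neg_div, div_le_div_iff₀ hα hβ]
  nlinarith

section Polytope

variable {E : Type*} [NormedAddCommGroup E] [NormedSpace ℝ E]

theorem ContinuousLinearMap.le_of_mem_convexHull {S : Set E} (l : E →L[ℝ] ℝ) {c : ℝ}
    (hS : ∀ s ∈ S, l s ≤ c) {x : E} (hx : x ∈ convexHull ℝ S) : l x ≤ c :=
  convexHull_min hS (convex_halfSpace_le l.toLinearMap.isLinear c) hx

theorem ContinuousLinearMap.apply_eq_of_mem_toExposed {l : E →L[ℝ] ℝ} {A : Set E} {x y : E}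
    (hx : x ∈ l.toExposed A) (hy : y ∈ l.toExposed A) : l x = l y :=
  le_antisymm (hy.2 x hx.1) (hx.2 y hy.1)

theorem IsExposed.eq_convexHull_inter_s6 {S F : Set E} (hS : S.Finite)
    (hF : IsExposed ℝ (convexHull ℝ S) F) : F = convexHull ℝ (S ∩ F) := by
  have hFconv : Convex ℝ F := hF.convex (convex_convexHull ℝ S)
  refine (convexHull_min inter_subset_right hFconv).antisymm' ?_
  calc F = closure (convexHull ℝ (F.extremePoints ℝ)) :=
        (closure_convexHull_extremePoints (hF.isCompact (hS.isCompact_convexHull ℝ)) hFconv).symm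
    _ ⊆ closure (convexHull ℝ (S ∩ F)) := closure_mono <| convexHull_mono fun x hx =>
        ⟨extremePoints_convexHull_subset (hF.isExtreme.extremePoints_subset_extremePoints hx),
          hx.1⟩
    _ = convexHull ℝ (S ∩ F) := ((hS.inter_of_left F).isClosed_convexHull ℝ).closure_eq

theorem eq_toExposed_convexHull {S G : Set E} (hS : S.Finite) (l : E →L[ℝ] ℝ) {c : ℝ}
    (hSc : ∀ s ∈ S, l s ≤ c) (hG : Convex ℝ G) (hGS : G ⊆ convexHull ℝ S)
    (hGc : ∀ x ∈ G, l x = c) (hSG : ∀ s ∈ S, l s = c → s ∈ G) (hGne : G.Nonempty) :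
    G = l.toExposed (convexHull ℝ S) := by
  obtain ⟨g, hg⟩ := hGne
  apply subset_antisymm
  · exact fun x hx => ⟨hGS hx, fun y hy => (l.le_of_mem_convexHull hSc hy).trans (hGc x hx).ge⟩
  · intro x hx
    rw [(ContinuousLinearMap.toExposed.isExposed (l := l)).eq_convexHull_inter_s6 hS] at hx
    refine convexHull_min ?_ hG hx
    rintro s ⟨hs, hsH⟩
    exact hSG s hs ((hSc s hs).antisymm ((hGc g hg).symm.trans_le (hsH.2 g (hGS hg))))

theorem IsExposed.trans_convexHull {S F G : Set E} (hS : S.Finite)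
    (hF : IsExposed ℝ (convexHull ℝ S) F) (hG : IsExposed ℝ F G) :
    IsExposed ℝ (convexHull ℝ S) G := by
  rintro ⟨g, hg⟩
  obtain ⟨l₀, rfl⟩ := hF ⟨g, hG.subset hg⟩
  obtain ⟨l₁, rfl⟩ := hG ⟨g, hg⟩
  set F := l₀.toExposed (convexHull ℝ S)
  have hgF : g ∈ F := hg.1
  have hout : ∀ s ∈ S \ F, l₀ s < l₀ g := by
    rintro s ⟨hs, hsF⟩
    obtain ⟨y, hy, hsy⟩ : ∃ y ∈ convexHull ℝ S, l₀ s < l₀ y := by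
      by_contra! h
      exact hsF ⟨subset_convexHull ℝ S hs, h⟩
    exact hsy.trans_le (hgF.2 y hy)
  -- tilting `l₀` slightly towards `l₁` keeps every vertex outside `F` strictly below `g`
  have hsmall : ∀ᶠ ε in 𝓝[>] (0 : ℝ), ∀ s ∈ S \ F, l₀ s + ε * l₁ s < l₀ g + ε * l₁ g :=
    hS.sdiff.eventually_all.2 fun s hs => nhdsWithin_le_nhds <|
      ContinuousAt.eventually_lt (by fun_prop) (by fun_prop) (by simpa using hout s hs)
  obtain ⟨ε, hε, hεpos⟩ := (hsmall.and self_mem_nhdsWithin).exists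
  have hl : ∀ x, (l₀ + ε • l₁) x = l₀ x + ε * l₁ x := fun x => rfl
  refine ⟨l₀ + ε • l₁, eq_toExposed_convexHull hS _ (c := l₀ g + ε * l₁ g) (fun s hs => ?_)
    (hG.convex (hF.convex (convex_convexHull ℝ S))) (fun x hx => hx.1.1) (fun x hx => ?_)
    (fun s hs hsc => ?_) ⟨g, hg⟩⟩
  · rw [hl]
    by_cases hsF : s ∈ F
    · rw [ContinuousLinearMap.apply_eq_of_mem_toExposed hsF hgF]
      have := hg.2 s hsF
      gcongr
    · exact (hε s ⟨hs, hsF⟩).le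
  · rw [hl, ContinuousLinearMap.apply_eq_of_mem_toExposed hx.1 hgF,
      ContinuousLinearMap.apply_eq_of_mem_toExposed hx hg]
  · have hsF : s ∈ F := by_contra fun hsF => (hε s ⟨hs, hsF⟩).ne (hl s ▸ hsc)
    rw [hl, ContinuousLinearMap.apply_eq_of_mem_toExposed hsF hgF, add_right_inj,
      mul_right_inj' hεpos.ne'] at hsc
    exact ⟨hsF, fun y hy => (hg.2 y hy).trans hsc.ge⟩

theorem exists_forall_lt_of_mem_extremePoints {P T : Set E} (hP : Convex ℝ P) {V : E}
    (hV : V ∈ P.extremePoints ℝ) (hT : T.Finite) (hTP : T ⊆ P) :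
    ∃ e : E →L[ℝ] ℝ, ∀ s ∈ T, s ≠ V → e s < e V := by
  have hVT : V ∉ convexHull ℝ (T \ {V}) := fun h =>
    (hP.mem_extremePoints_iff_mem_sdiff_convexHull_sdiff.1 hV).2
      (convexHull_mono (sdiff_subset_sdiff_left hTP) h)
  obtain ⟨e, u, he, hu⟩ := geometric_hahn_banach_closed_point (convex_convexHull ℝ _)
    (hT.sdiff.isClosed_convexHull ℝ) hVT
  exact ⟨e, fun s hs hsV => (he s (subset_convexHull ℝ _ ⟨hs, hsV⟩)).trans hu⟩

theorem exists_eq_segment_of_finrank_vectorSpan_eq_one {P : Set E} (hPc : IsCompact P)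
    (hPconv : Convex ℝ P) (hP : finrank ℝ (vectorSpan ℝ P) = 1) {V x : E}
    (hV : V ∈ P.extremePoints ℝ) (f : E →L[ℝ] ℝ) (hx : x ∈ P) (hfx : f V < f x) :
    ∃ Z ∈ P.extremePoints ℝ, P = segment ℝ V Z ∧ f V < f Z := by
  obtain ⟨Z, hZ, hZmax⟩ := hPc.exists_isMaxOn ⟨x, hx⟩ f.continuous.continuousOn
  have hfZ : f V < f Z := hfx.trans_le (hZmax hx)
  have hline : ∀ y ∈ P, y - V = ((f y - f V) / (f Z - f V)) • (Z - V) := fun y hy =>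
    sub_eq_smul_of_finrank_vectorSpan_eq_one hP f.toLinearMap hV.1 hZ hy hfZ.ne
  -- otherwise `V` would lie strictly inside the segment `[y, Z]`
  have hmin : ∀ y ∈ P, f V ≤ f y := by
    intro y hy
    by_contra! hyV
    have hseg : V ∈ openSegment ℝ y Z := by
      rw [openSegment_eq_image']
      have hfZy : f y < f Z := hyV.trans hfZ
      refine ⟨(f V - f y) / (f Z - f y), ⟨div_pos (by linarith) (by linarith),
        (div_lt_one (by linarith)).2 (by linarith)⟩, ?_⟩
      have hVy := sub_eq_smul_of_finrank_vectorSpan_eq_one hP f.toLinearMap hy hZ hV.1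
        hfZy.ne
      simp only [ContinuousLinearMap.coe_coe] at hVy
      simp only [← hVy, add_sub_cancel]
    exact hyV.ne (congrArg f (hV.2 hy hZ hseg))
  have hPseg : P = segment ℝ V Z := by
    refine subset_antisymm (fun y hy => ?_) (hPconv.segment_subset hV.1 hZ)
    rw [segment_eq_image']
    have hyZ : f y ≤ f Z := hZmax hy
    refine ⟨(f y - f V) / (f Z - f V), ⟨div_nonneg (by linarith [hmin y hy]) (by linarith),
      (div_le_one (by linarith)).2 (by linarith)⟩, ?_⟩
    simp only [← hline y hy, add_sub_cancel]
  have hZexp : {Z} = f.toExposed P := by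
    refine subset_antisymm (singleton_subset_iff.2 ⟨hZ, fun y hy => hZmax hy⟩) fun y hy => ?_
    have hy' := hline y hy.1
    rw [ContinuousLinearMap.apply_eq_of_mem_toExposed hy ⟨hZ, fun w hw => hZmax hw⟩,
      div_self (by linarith), one_smul, sub_left_inj] at hy'
    exact hy'
  exact ⟨Z, isExtreme_singleton.1
    (hZexp ▸ ContinuousLinearMap.toExposed.isExposed.isExtreme), hPseg, hfZ⟩

theorem exists_isExposed_finrank_vectorSpan_lt [FiniteDimensional ℝ E] {S : Set E}
    (hS : S.Finite) {V b s : E} (hV : V ∈ (convexHull ℝ S).extremePoints ℝ) (h : E →L[ℝ] ℝ)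
    (hb : b ∈ S) (hbh : h V < h b) (hs : s ∈ S) (hsV : s ≠ V) (hsh : h s ≤ h V) :
    ∃ G, IsExposed ℝ (convexHull ℝ S) G ∧ V ∈ G ∧ (∃ b ∈ S ∩ G, h V < h b) ∧
      finrank ℝ (vectorSpan ℝ G) < finrank ℝ (vectorSpan ℝ (convexHull ℝ S)) := by
  obtain ⟨e, he⟩ := exists_forall_lt_of_mem_extremePoints (convex_convexHull ℝ S) hV hS
    (subset_convexHull ℝ S)
  -- tilt `e`, which exposes `V`, towards `h` until a first vertex `b₀` with `h V < h b₀` ties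
  obtain ⟨b₀, ⟨hb₀S, hb₀h⟩, hb₀min⟩ := exists_min_image {b ∈ S | h V < h b}
    (fun b => (e V - e b) / (h b - h V)) (hS.subset (sep_subset _ _)) ⟨b, hb, hbh⟩
  set t := (e V - e b₀) / (h b₀ - h V)
  have ht : 0 < t :=
    div_pos (sub_pos.2 (he b₀ hb₀S fun hb₀V => hb₀h.ne (hb₀V ▸ rfl))) (sub_pos.2 hb₀h)
  set l := e + t • h
  have hl : ∀ x, l x = e x + t * h x := fun x => rfl
  have hlS : ∀ y ∈ S, l y ≤ l V := by
    intro y hy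
    rw [hl, hl]
    rcases lt_or_ge (h V) (h y) with hVy | hyV
    · have := hb₀min y ⟨hy, hVy⟩
      rw [le_div_iff₀ (sub_pos.2 hVy)] at this
      linarith
    · rcases eq_or_ne y V with rfl | hyV'
      · rfl
      · nlinarith [he y hy hyV']
  have hlb₀ : l b₀ = l V := by
    have : t * (h b₀ - h V) = e V - e b₀ := div_mul_cancel₀ _ (sub_pos.2 hb₀h).ne'
    rw [hl, hl]
    linarith
  have hls : l s < l V := by
    rw [hl, hl]
    nlinarith [he s hs hsV]
  have hVG : V ∈ l.toExposed (convexHull ℝ S) :=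
    ⟨hV.1, fun y hy => l.le_of_mem_convexHull hlS hy⟩
  refine ⟨l.toExposed (convexHull ℝ S), ContinuousLinearMap.toExposed.isExposed, hVG,
    ⟨b₀, ⟨hb₀S, subset_convexHull ℝ S hb₀S, fun y hy => ?_⟩, hb₀h⟩,
    finrank_vectorSpan_lt_of_apply_eq l.toLinearMap (fun x hx => hx.1)
      (fun x hx y hy => ContinuousLinearMap.apply_eq_of_mem_toExposed hx hy)
      (subset_convexHull ℝ S hs) hV.1 hls.ne⟩
  exact hlb₀ ▸ hVG.2 y hy

end Polytope

theorem EdgeNeighbor.of_isExposed {n : ℕ} {S G : Set (Fin n → ℝ)} (hS : S.Finite)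
    (hG : IsExposed ℝ (convexHull ℝ S) G) {V Z : Fin n → ℝ} (h : EdgeNeighbor G V Z) :
    EdgeNeighbor (convexHull ℝ S) V Z :=
  ⟨hG.isExtreme.extremePoints_subset_extremePoints h.1, h.2.1, h.2.2.1,
    hG.trans_convexHull hS h.2.2.2.1, h.2.2.2.2⟩

theorem exists_edgeNeighbor_lt {n : ℕ} {S : Set (Fin n → ℝ)} (hS : S.Finite) {V x : Fin n → ℝ}
    (hV : V ∈ (convexHull ℝ S).extremePoints ℝ) (f : (Fin n → ℝ) →L[ℝ] ℝ)
    (hx : x ∈ convexHull ℝ S) (hfx : f V < f x) :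
    ∃ Z, EdgeNeighbor (convexHull ℝ S) V Z ∧ f V < f Z := by
  induction hd : finrank ℝ (vectorSpan ℝ (convexHull ℝ S)) using Nat.strong_induction_on
    generalizing S x with
  | _ d ih =>
  obtain rfl | rfl | hd2 : d = 0 ∨ d = 1 ∨ 2 ≤ d := by omega
  · have hxV : x = V :=
      (vectorSpan_eq_bot_iff_subsingleton ℝ).1 (Submodule.finrank_eq_zero.1 hd) hx hV.1
    exact absurd hfx (hxV ▸ lt_irrefl _)
  · obtain ⟨Z, hZ, hP, hfZ⟩ := exists_eq_segment_of_finrank_vectorSpan_eq_one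
      (hS.isCompact_convexHull ℝ) (convex_convexHull ℝ S) hd hV f hx hfx
    exact ⟨Z, ⟨hZ, fun hZV => hfZ.ne (hZV ▸ rfl), ⟨V, left_mem_segment ℝ V Z⟩,
      hP ▸ IsExposed.refl _, hP ▸ hd⟩, hfZ⟩
  have hVS : V ∈ S := extremePoints_convexHull_subset hV
  obtain ⟨h, ⟨s, hs, hsV, hsh⟩, ⟨b, hb, hbh⟩, hhf⟩ : ∃ h : (Fin n → ℝ) →L[ℝ] ℝ,
      (∃ s ∈ S, s ≠ V ∧ h s ≤ h V) ∧ (∃ b ∈ S, h V < h b) ∧ ∀ b ∈ S, h V < h b → f V < f b := by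
    by_cases hdown : ∃ s ∈ S, s ≠ V ∧ f s ≤ f V
    · refine ⟨f, hdown, ?_, fun _ _ => id⟩
      by_contra! hup
      exact (f.le_of_mem_convexHull hup hx).not_gt hfx
    · -- every vertex other than `V` improves `f`: any smaller face through `V` and another
      -- vertex will do
      push Not at hdown
      have hspan : vectorSpan ℝ (convexHull ℝ S) = vectorSpan ℝ S := by
        rw [← direction_affineSpan, affineSpan_convexHull, direction_affineSpan]
      obtain ⟨h, ⟨s, hs, hsV, hsh⟩, hup⟩ :=
        exists_apply_eq_apply_lt_of_two_le_finrank hVS (hspan ▸ hd ▸ hd2)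
      exact ⟨h, ⟨s, hs, hsV, hsh.le⟩, hup,
        fun b hb hbh => hdown b hb fun hbV => hbh.ne (hbV ▸ rfl)⟩
  obtain ⟨G, hGexp, hVG, ⟨b, ⟨hbS, hbG⟩, hbh⟩, hGd⟩ :=
    exists_isExposed_finrank_vectorSpan_lt hS hV h hb hbh hs hsV hsh
  have hG : G = convexHull ℝ (S ∩ G) := hGexp.eq_convexHull_inter_s6 hS
  have hVG' : V ∈ (convexHull ℝ (S ∩ G)).extremePoints ℝ :=
    hG ▸ inter_extremePoints_subset_extremePoints_of_subset hGexp.subset ⟨hVG, hV⟩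
  obtain ⟨Z, hZ, hfZ⟩ := ih _ (hd ▸ hGd) (hS.inter_of_left G) hVG' (hG ▸ hbG)
    (hhf b hbS hbh) (by rw [← hG])
  rw [← hG] at hZ
  exact ⟨Z, hZ.of_isExposed hS hGexp, hfZ⟩

noncomputable def dotL {n : ℕ} (c : Fin n → ℝ) : (Fin n → ℝ) →L[ℝ] ℝ :=
  LinearMap.toContinuousLinearMap
    { toFun := dot c
      map_add' := fun p q => by simp only [dot, Pi.add_apply, mul_add, Finset.sum_add_distrib]
      map_smul' := fun r p => by
        simp only [dot, Pi.smul_apply, smul_eq_mul, RingHom.id_apply, Finset.mul_sum,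
          mul_left_comm] }

theorem mul_sub_le_of_forall_edgeNeighbor {n : ℕ} {S : Set (Fin n → ℝ)} (hS : S.Finite)
    {V a E : Fin n → ℝ} (hV : V ∈ (convexHull ℝ S).extremePoints ℝ)
    (hopt : ∀ p ∈ convexHull ℝ S, dot a p = dot a V → dot E V ≤ dot E p) {μ : ℝ}
    (hplus : ∀ Z, EdgeNeighbor (convexHull ℝ S) V Z → dot a V < dot a Z →
      μ ≤ (dot E Z - dot E V) / (dot a Z - dot a V))
    (hminus : ∀ Z, EdgeNeighbor (convexHull ℝ S) V Z → dot a Z < dot a V →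
      (dot E Z - dot E V) / (dot a Z - dot a V) ≤ μ) :
    ∀ p ∈ convexHull ℝ S, μ * (dot a p - dot a V) ≤ dot E p - dot E V := by
  have hf : ∀ x, (μ • dotL a - dotL E) x = μ * dot a x - dot E x := fun x => rfl
  intro p hp
  by_contra! hlt
  obtain ⟨Z, hZ, hfZ⟩ := exists_edgeNeighbor_lt hS hV (μ • dotL a - dotL E) hp
    (by rw [hf, hf]; linarith)
  rw [hf, hf] at hfZ
  rcases lt_trichotomy (dot a Z) (dot a V) with hZV | hZV | hZV
  · have := hminus Z hZ hZV
    rw [div_le_iff_of_neg (sub_neg.2 hZV)] at this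
    linarith
  · rw [hZV] at hfZ
    linarith [hopt Z (extremePoints_subset hZ.1) hZV]
  · have := hplus Z hZ hZV
    rw [le_div_iff₀ (sub_pos.2 hZV)] at this
    linarith

theorem stmt_6_general (n : ℕ) (S : Set (Fin n → ℝ)) (hS : S.Finite)
    (P : Set (Fin n → ℝ)) (hP : P = convexHull ℝ S)
    (a E : Fin n → ℝ)
    (V : Fin n → ℝ) (hV : V ∈ Set.extremePoints ℝ P)
    (hopt : ∀ p ∈ P, dot a p = dot a V → dot E V ≤ dot E p)
    (Nplus Nminus : Set (Fin n → ℝ))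
    (hNp : Nplus = {Z | EdgeNeighbor P V Z ∧ dot a V < dot a Z})
    (hNm : Nminus = {Z | EdgeNeighbor P V Z ∧ dot a Z < dot a V})
    (γp γm : ℝ)
    (hγp : IsLeast ((fun Z => (dot E Z - dot E V) / (dot a Z - dot a V)) '' Nplus) γp)
    (hγm : IsGreatest ((fun Z => (dot E Z - dot E V) / (dot a Z - dot a V)) '' Nminus) γm) :
    (∀ p ∈ P, dot a V < dot a p →
      γp ≤ (dot E p - dot E V) / (dot a p - dot a V)) ∧
    γm ≤ γp ∧
    (∀ p ∈ P, dot a p < dot a V →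
      (dot E p - dot E V) / (dot a p - dot a V) ≤ γm) := by
  subst hP hNp hNm
  obtain ⟨Zp, ⟨hZp, hZpa⟩, hγZp⟩ := hγp.1
  obtain ⟨Zm, ⟨hZm, hZma⟩, hγZm⟩ := hγm.1
  have hmp : γm ≤ γp := hγZm ▸ hγZp ▸ slope_le_slope_of_forall_le (convex_convexHull ℝ S)
    (dotL a).toLinearMap (dotL E).toLinearMap hopt (extremePoints_subset hZm.1)
    (extremePoints_subset hZp.1) hZma hZpa
  have hplus : ∀ Z, EdgeNeighbor (convexHull ℝ S) V Z → dot a V < dot a Z →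
      γp ≤ (dot E Z - dot E V) / (dot a Z - dot a V) := fun Z hZ h => hγp.2 ⟨Z, ⟨hZ, h⟩, rfl⟩
  have hminus : ∀ Z, EdgeNeighbor (convexHull ℝ S) V Z → dot a Z < dot a V →
      (dot E Z - dot E V) / (dot a Z - dot a V) ≤ γm := fun Z hZ h => hγm.2 ⟨Z, ⟨hZ, h⟩, rfl⟩
  refine ⟨fun p hp hVp => ?_, hmp, fun p hp hpV => ?_⟩
  · rw [le_div_iff₀ (sub_pos.2 hVp)]
    exact mul_sub_le_of_forall_edgeNeighbor hS hV hopt hplus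
      (fun Z hZ h => (hminus Z hZ h).trans hmp) p hp
  · rw [div_le_iff_of_neg (sub_neg.2 hpV)]
    exact mul_sub_le_of_forall_edgeNeighbor hS hV hopt
      (fun Z hZ h => hmp.trans (hplus Z hZ h)) hminus p hp

/-- At a cost-optimal vertex `V` of a polytope, with both target-increasing and
target-decreasing edge-neighbors present, the cost-vs-target gradient towards any point of the
polytope is at least `γ⁺min` if the target increases and at most `γ⁻max` if it decreases, and
`γ⁺min ≥ γ⁻max`. -/
theorem stmt_6 (n : ℕ) (S : Set (Fin n → ℝ)) (hS : S.Finite)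
    (P : Set (Fin n → ℝ)) (hP : P = convexHull ℝ S)
    (a E : Fin n → ℝ)
    (V : Fin n → ℝ) (hV : V ∈ Set.extremePoints ℝ P)
    (hopt : ∀ p ∈ P, dot a p = dot a V → dot E V ≤ dot E p)
    (Nplus Nminus : Set (Fin n → ℝ))
    (hNp : Nplus = {Z | EdgeNeighbor P V Z ∧ dot a V < dot a Z})
    (hNm : Nminus = {Z | EdgeNeighbor P V Z ∧ dot a Z < dot a V})
    (hNpne : Nplus.Nonempty) (hNmne : Nminus.Nonempty)
    (γp γm : ℝ)
    (hγp : IsLeast ((fun Z => (dot E Z - dot E V) / (dot a Z - dot a V)) '' Nplus) γp)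
    (hγm : IsGreatest ((fun Z => (dot E Z - dot E V) / (dot a Z - dot a V)) '' Nminus) γm) :
    (∀ p ∈ P, dot a V < dot a p →
      γp ≤ (dot E p - dot E V) / (dot a p - dot a V)) ∧
    γm ≤ γp ∧
    (∀ p ∈ P, dot a p < dot a V →
      (dot E p - dot E V) / (dot a p - dot a V) ≤ γm) :=
  stmt_6_general n S hS P hP a E V hV hopt Nplus Nminus hNp hNm γp γm hγp hγm
end

section
/- Let S ⊆ (Fin n → ℝ) be finite, P = convexHull ℝ S, a, E : Fin n → ℝ, and let V be a cost-optimal extreme point of P whose target value is minimal: a·V ≤ a·p for all p ∈ P. Assume the set N₊ of edge-neighbors Z of V with a·Z > a·V is nonempty, with minimal gradient γ⁺min. Then for every p ∈ P with a·p > a·V one has (E·p − E·V)/(a·p − a·V) ≥ γ⁺min. -/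
theorem dot_eq_dotProduct {n : ℕ} (a p : Fin n → ℝ) : dot a p = a ⬝ᵥ p := rfl

open Set Filter Topology

section Faces

variable {E : Type*}

theorem exists_isMaxOn_add_mul_face_iff {A : Set E} (hA : A.Finite) {f c : E → ℝ} {V : E}
    (hf : IsMaxOn f A V) (hc : IsMaxOn c {x ∈ A | f x = f V} V) :
    ∃ ε : ℝ, IsMaxOn (fun x => f x + ε * c x) A V ∧
      ∀ x ∈ A, (f x + ε * c x = f V + ε * c V ↔ f x = f V ∧ c x = c V) := by
  have hev : ∀ᶠ ε in 𝓝 (0 : ℝ), ∀ x ∈ {x ∈ A | f x ≠ f V}, f x + ε * c x < f V + ε * c V := by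
    refine (eventually_all_finite (hA.subset (sep_subset _ _))).2 fun x hx => ?_
    refine ContinuousAt.eventually_lt (by fun_prop) (by fun_prop) ?_
    simpa using (hf hx.1).lt_of_ne hx.2
  obtain ⟨ε, hε, hεpos : 0 < ε⟩ :=
    ((hev.filter_mono (nhdsWithin_le_nhds (s := Ioi 0))).and self_mem_nhdsWithin).exists
  have hface : ∀ x ∈ A, f x = f V → f x + ε * c x ≤ f V + ε * c V := fun x hx hfx => by
    have : c x ≤ c V := hc ⟨hx, hfx⟩
    rw [hfx]; gcongr
  refine ⟨ε, fun x hx => ?_, fun x hx => ⟨fun h => ?_, fun ⟨h₁, h₂⟩ => by rw [h₁, h₂]⟩⟩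
  · by_cases hfx : f x = f V
    · exact hface x hx hfx
    · exact (hε x ⟨hx, hfx⟩).le
  · by_cases hfx : f x = f V
    · refine ⟨hfx, ?_⟩
      rw [hfx] at h
      exact mul_left_cancel₀ hεpos.ne' (add_left_cancel h)
    · exact absurd h (hε x ⟨hx, hfx⟩).ne

variable [AddCommGroup E] [Module ℝ E]

theorem isMaxOn_convexHull {S : Set E} {V : E} (f : E →ₗ[ℝ] ℝ) (hf : IsMaxOn f S V) :
    IsMaxOn f (convexHull ℝ S) V :=
  convexHull_min hf (convex_halfSpace_le f.isLinear (f V))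

theorem mem_convexHull_level_of_isMaxOn {S : Set E} {V x : E} (f : E →ₗ[ℝ] ℝ)
    (hf : IsMaxOn f S V) (hx : x ∈ convexHull ℝ S) (hfx : f x = f V) :
    x ∈ convexHull ℝ {s ∈ S | f s = f V} := by
  set S₀ := {s ∈ S | f s = f V}
  have hS₀ : convexHull ℝ S₀ ⊆ {y | f y = f V} :=
    convexHull_min (fun s hs => hs.2) (convex_hyperplane f.isLinear _)
  -- a segment from the face to a point strictly below it stays strictly below, except at its end
  have hT : Convex ℝ ({y | f y < f V} ∪ convexHull ℝ S₀) := by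
    have key : ∀ y ∈ convexHull ℝ S₀, ∀ z, f z < f V → ∀ a b : ℝ, 0 ≤ a → 0 ≤ b → a + b = 1 →
        a • y + b • z ∈ {y | f y < f V} ∪ convexHull ℝ S₀ := by
      intro y hy z hz a b ha hb hab
      rcases hb.eq_or_lt with rfl | hb
      · right; simpa [show a = 1 by linarith] using hy
      · left
        have hy' : f y = f V := hS₀ hy
        obtain rfl : a = 1 - b := by linarith
        simp only [mem_ofPred_eq, map_add, map_smul, smul_eq_mul, hy']
        nlinarith [mul_pos hb (sub_pos.2 hz)]
    rintro y (hy | hy) z (hz | hz) a b ha hb hab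
    · exact Or.inl (convex_halfSpace_lt f.isLinear _ hy hz ha hb hab)
    · simpa [add_comm] using key z hz y hy b a hb ha (by linarith)
    · exact key y hy z hz a b ha hb hab
    · exact Or.inr (convex_convexHull ℝ _ hy hz ha hb hab)
  have hST : S ⊆ {y | f y < f V} ∪ convexHull ℝ S₀ := fun s hs =>
    (show f s ≤ f V from hf hs).lt_or_eq.imp id fun h => subset_convexHull ℝ _ ⟨hs, h⟩
  exact (convexHull_min hST hT hx).resolve_left hfx.not_lt

theorem isExposed_segment_of_isMaxOn [TopologicalSpace E] {S : Set E} {V Z : E}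
    (l : StrongDual ℝ E) (hV : V ∈ S) (hZ : Z ∈ S) (hl : IsMaxOn l S V) (hlZ : l Z = l V)
    (hface : {s ∈ S | l s = l V} ⊆ segment ℝ V Z) :
    IsExposed ℝ (convexHull ℝ S) (segment ℝ V Z) := by
  have hhull : IsMaxOn l (convexHull ℝ S) V := isMaxOn_convexHull l.toLinearMap hl
  refine fun _ => ⟨l, Subset.antisymm (fun x hx => ⟨segment_subset_convexHull hV hZ hx, ?_⟩) ?_⟩
  · have hlx : l x = l V :=
      (convex_hyperplane l.isLinear (l V)).segment_subset (show l V = l V from rfl) hlZ hx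
    exact fun y hy => hlx ▸ hhull hy
  · rintro x ⟨hx, hmax⟩
    have hlx : l x = l V := le_antisymm (hhull hx) (hmax V (subset_convexHull ℝ S hV))
    exact convexHull_min hface (convex_segment V Z)
      (mem_convexHull_level_of_isMaxOn l.toLinearMap hl hx hlx)

theorem right_mem_extremePoints_segment_s7 (V Z : E) : Z ∈ (segment ℝ V Z).extremePoints ℝ := by
  rcases eq_or_ne V Z with rfl | hVZ
  · simp [segment_same]
  rw [(convex_segment V Z).mem_extremePoints_iff_convex_sdiff, segment_eq_image_lineMap]
  refine ⟨⟨1, by simp, by simp⟩, ?_⟩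
  have : AffineMap.lineMap V Z '' Icc (0 : ℝ) 1 \ {Z} = AffineMap.lineMap V Z '' Ico (0 : ℝ) 1 := by
    rw [← Icc_sdiff_right, image_sdiff (AffineMap.lineMap_injective ℝ hVZ), image_singleton,
      AffineMap.lineMap_apply_one]
  rw [this]
  exact (convex_Ico 0 1).affine_image _

end Faces

section VertexFigure

variable {ι : Type*} [Fintype ι]

theorem exists_dotProduct_lt_of_mem_extremePoints {S : Set (ι → ℝ)} {V : ι → ℝ}
    (hS : S.Finite) (hV : V ∈ (convexHull ℝ S).extremePoints ℝ) :
    ∃ m : ι → ℝ, ∀ s ∈ S, s ≠ V → m ⬝ᵥ s < m ⬝ᵥ V := by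
  classical
  have hVS : V ∉ convexHull ℝ (S \ {V}) := fun h =>
    ((convex_convexHull ℝ S).mem_extremePoints_iff_mem_sdiff_convexHull_sdiff.1 hV).2
      (convexHull_mono (sdiff_subset_sdiff_left (subset_convexHull ℝ S)) h)
  obtain ⟨l, u, hl, hlV⟩ := geometric_hahn_banach_closed_point (convex_convexHull ℝ _)
    ((hS.subset sdiff_subset).isClosed_convexHull (𝕜 := ℝ)) hVS
  refine ⟨(dotProductEquiv ℝ ι).symm l.toLinearMap, fun s hs hsV => ?_⟩
  have hdot : ∀ x, (dotProductEquiv ℝ ι).symm l.toLinearMap ⬝ᵥ x = l x := fun x =>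
    LinearMap.congr_fun ((dotProductEquiv ℝ ι).apply_symm_apply l.toLinearMap) x
  rw [hdot, hdot]
  exact (hl s (subset_convexHull ℝ _ ⟨hs, hsV⟩)).trans hlV

/-- The direction from `V` to `s`, rescaled so that `m ⬝ᵥ rayDir m V s = -1`; when `m` exposes
the vertex `V`, these points form the vertex figure of `V`. -/
noncomputable def rayDir (m V s : ι → ℝ) : ι → ℝ := (m ⬝ᵥ (V - s))⁻¹ • (s - V)

theorem sub_eq_smul_rayDir {m V s : ι → ℝ} (hs : m ⬝ᵥ s < m ⬝ᵥ V) :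
    s - V = (m ⬝ᵥ (V - s)) • rayDir m V s := by
  rw [rayDir, smul_inv_smul₀ (by rw [dotProduct_sub]; exact (sub_pos.2 hs).ne')]

theorem dotProduct_sub_eq_mul_rayDir {m V s : ι → ℝ} (hs : m ⬝ᵥ s < m ⬝ᵥ V) (f : ι → ℝ) :
    f ⬝ᵥ s - f ⬝ᵥ V = m ⬝ᵥ (V - s) * f ⬝ᵥ rayDir m V s := by
  rw [← dotProduct_sub, sub_eq_smul_rayDir hs, dotProduct_smul, smul_eq_mul]

theorem dotProduct_rayDir_pos_iff {m V s : ι → ℝ} (hs : m ⬝ᵥ s < m ⬝ᵥ V) (g : ι → ℝ) :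
    0 < g ⬝ᵥ rayDir m V s ↔ g ⬝ᵥ V < g ⬝ᵥ s := by
  have hw : 0 < m ⬝ᵥ (V - s) := by rw [dotProduct_sub]; linarith
  rw [← sub_pos (a := g ⬝ᵥ s), dotProduct_sub_eq_mul_rayDir hs, mul_pos_iff_of_pos_left hw]

theorem dotProduct_rayDir_self {m V s : ι → ℝ} (hs : m ⬝ᵥ s < m ⬝ᵥ V) :
    m ⬝ᵥ rayDir m V s = -1 := by
  have h := dotProduct_sub_eq_mul_rayDir hs m
  rw [dotProduct_sub] at h
  have : (m ⬝ᵥ V - m ⬝ᵥ s) * (m ⬝ᵥ rayDir m V s + 1) = 0 := by linear_combination -h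
  exact eq_neg_of_add_eq_zero_left ((mul_eq_zero.1 this).resolve_left (by linarith))

theorem exists_isMaxOn_face_eq_argmax_rayDir {A : Set (ι → ℝ)} {m V : ι → ℝ} (hA : A.Finite)
    (hm : ∀ s ∈ A, s ≠ V → m ⬝ᵥ s < m ⬝ᵥ V) (hne : (A \ {V}).Nonempty) (u : ι → ℝ) :
    ∃ f : ι → ℝ, IsMaxOn (f ⬝ᵥ ·) A V ∧ ∀ s ∈ A \ {V},
      (f ⬝ᵥ s = f ⬝ᵥ V ↔ IsMaxOn (fun t => u ⬝ᵥ rayDir m V t) (A \ {V}) s) := by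
  obtain ⟨s₀, hs₀, hmax⟩ :=
    (A \ {V}).exists_max_image (fun t => u ⬝ᵥ rayDir m V t) (hA.subset sdiff_subset) hne
  set σ := u ⬝ᵥ rayDir m V s₀
  have hinc : ∀ s ∈ A \ {V}, (u + σ • m) ⬝ᵥ s - (u + σ • m) ⬝ᵥ V
      = m ⬝ᵥ (V - s) * (u ⬝ᵥ rayDir m V s - σ) := fun s hs => by
    have hsV := hm s hs.1 hs.2
    rw [dotProduct_sub_eq_mul_rayDir hsV, add_dotProduct, smul_dotProduct, smul_eq_mul,
      dotProduct_rayDir_self hsV]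
    ring
  have hw : ∀ s ∈ A \ {V}, 0 < m ⬝ᵥ (V - s) := fun s hs => by
    rw [dotProduct_sub]; linarith [hm s hs.1 hs.2]
  refine ⟨u + σ • m, fun s hs => ?_, fun s hs => ?_⟩
  · rcases eq_or_ne s V with rfl | hsV
    · exact le_refl ((u + σ • m) ⬝ᵥ s)
    · have := mul_nonpos_of_nonneg_of_nonpos (hw s ⟨hs, hsV⟩).le
        (sub_nonpos.2 (hmax s ⟨hs, hsV⟩))
      rw [← hinc s ⟨hs, hsV⟩] at this
      exact sub_nonpos.1 this
  · rw [← sub_eq_zero, hinc s hs, mul_eq_zero, sub_eq_zero, or_iff_right (hw s hs).ne']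
    exact ⟨fun h t ht => (hmax t ht).trans h.ge, fun h => le_antisymm (hmax s hs) (h hs₀)⟩

theorem isMaxOn_dotProduct_iff_eq {α : Type*} {B : Set α} {φ : α → ι → ℝ} {z s : α}
    (hz : IsMaxOn (fun t => φ t ⬝ᵥ φ t) B z) (hzB : z ∈ B) (hs : s ∈ B) :
    IsMaxOn (fun t => φ z ⬝ᵥ φ t) B s ↔ φ s = φ z := by
  have hsq : ∀ t, (φ t - φ z) ⬝ᵥ (φ t - φ z) = φ t ⬝ᵥ φ t - 2 * (φ z ⬝ᵥ φ t) + φ z ⬝ᵥ φ z :=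
    fun t => by simp only [sub_dotProduct, dotProduct_sub, dotProduct_comm (φ t) (φ z)]; ring
  have hnonneg : ∀ t, 0 ≤ (φ t - φ z) ⬝ᵥ (φ t - φ z) := fun t => by
    simpa using dotProduct_star_self_nonneg (φ t - φ z)
  constructor
  · intro h
    have h₁ : φ z ⬝ᵥ φ z ≤ φ z ⬝ᵥ φ s := h hzB
    have h₂ : φ s ⬝ᵥ φ s ≤ φ z ⬝ᵥ φ z := hz hs
    have : (φ s - φ z) ⬝ᵥ (φ s - φ z) = 0 := le_antisymm (by linarith [hsq s]) (hnonneg s)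
    exact sub_eq_zero.1 (dotProduct_self_eq_zero.1 this)
  · intro h t ht
    have : φ t ⬝ᵥ φ t ≤ φ z ⬝ᵥ φ z := hz ht
    show φ z ⬝ᵥ φ t ≤ φ z ⬝ᵥ φ s
    rw [h]
    linarith [hsq t, hnonneg t]

theorem mem_segment_of_rayDir_eq {m V s Z : ι → ℝ} (hs : m ⬝ᵥ s < m ⬝ᵥ V)
    (hZs : m ⬝ᵥ Z ≤ m ⬝ᵥ s) (h : rayDir m V s = rayDir m V Z) : s ∈ segment ℝ V Z := by
  have hZ : m ⬝ᵥ Z < m ⬝ᵥ V := hZs.trans_lt hs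
  have hw : 0 < m ⬝ᵥ (V - s) := by rw [dotProduct_sub]; linarith
  have hww : m ⬝ᵥ (V - s) ≤ m ⬝ᵥ (V - Z) := by rw [dotProduct_sub, dotProduct_sub]; linarith
  rw [segment_eq_image']
  refine ⟨m ⬝ᵥ (V - s) / m ⬝ᵥ (V - Z),
    ⟨div_nonneg hw.le (hw.trans_le hww).le, (div_le_one (hw.trans_le hww)).2 hww⟩, ?_⟩
  simp only
  rw [sub_eq_smul_rayDir hZ, ← h, smul_smul, div_mul_cancel₀ _ (hw.trans_le hww).ne',
    ← sub_eq_smul_rayDir hs, add_sub_cancel]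

theorem exists_isMaxOn_face_subset_segment {A : Set (ι → ℝ)} {m V : ι → ℝ} (hA : A.Finite)
    (hm : ∀ s ∈ A, s ≠ V → m ⬝ᵥ s < m ⬝ᵥ V) (hne : (A \ {V}).Nonempty) :
    ∃ Z ∈ A \ {V}, ∃ c : ι → ℝ, IsMaxOn (c ⬝ᵥ ·) A V ∧ c ⬝ᵥ Z = c ⬝ᵥ V ∧
      {s ∈ A | c ⬝ᵥ s = c ⬝ᵥ V} ⊆ segment ℝ V Z := by
  -- a longest ray direction is strictly exposed among the ray directions
  obtain ⟨Z₀, hZ₀, hZ₀max⟩ := (A \ {V}).exists_max_image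
    (fun t => rayDir m V t ⬝ᵥ rayDir m V t) (hA.subset sdiff_subset) hne
  obtain ⟨c, hcV, hcface⟩ := exists_isMaxOn_face_eq_argmax_rayDir hA hm hne (rayDir m V Z₀)
  have hface : ∀ s ∈ A \ {V}, c ⬝ᵥ s = c ⬝ᵥ V ↔ rayDir m V s = rayDir m V Z₀ := fun s hs =>
    (hcface s hs).trans (isMaxOn_dotProduct_iff_eq hZ₀max hZ₀ hs)
  obtain ⟨Z, hZ, hZmin⟩ := {s ∈ A \ {V} | rayDir m V s = rayDir m V Z₀}.exists_min_image
    (m ⬝ᵥ ·) ((hA.subset sdiff_subset).subset (sep_subset _ _)) ⟨Z₀, hZ₀, rfl⟩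
  refine ⟨Z, hZ.1, c, hcV, (hface Z hZ.1).2 hZ.2, fun s ⟨hsA, hs⟩ => ?_⟩
  rcases eq_or_ne s V with rfl | hsV
  · exact left_mem_segment ℝ s Z
  · have hsZ₀ : rayDir m V s = rayDir m V Z₀ := (hface s ⟨hsA, hsV⟩).1 hs
    exact mem_segment_of_rayDir_eq (hm s hsA hsV) (hZmin s ⟨⟨hsA, hsV⟩, hsZ₀⟩)
      (hsZ₀.trans hZ.2.symm)

theorem exists_isMaxOn_dotProduct_face_iff {A : Set (ι → ℝ)} (hA : A.Finite)
    {f c V : ι → ℝ} (hf : IsMaxOn (f ⬝ᵥ ·) A V)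
    (hc : IsMaxOn (c ⬝ᵥ ·) {s ∈ A | f ⬝ᵥ s = f ⬝ᵥ V} V) :
    ∃ F : ι → ℝ, IsMaxOn (F ⬝ᵥ ·) A V ∧
      ∀ s ∈ A, (F ⬝ᵥ s = F ⬝ᵥ V ↔ f ⬝ᵥ s = f ⬝ᵥ V ∧ c ⬝ᵥ s = c ⬝ᵥ V) := by
  obtain ⟨ε, hmax, hface⟩ := exists_isMaxOn_add_mul_face_iff hA hf hc
  have hF : ∀ x, (f + ε • c) ⬝ᵥ x = f ⬝ᵥ x + ε * c ⬝ᵥ x := fun x => by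
    rw [add_dotProduct, smul_dotProduct, smul_eq_mul]
  refine ⟨f + ε • c, fun s hs => ?_, fun s hs => ?_⟩
  · show (f + ε • c) ⬝ᵥ s ≤ (f + ε • c) ⬝ᵥ V
    rw [hF, hF]
    exact hmax hs
  · rw [hF, hF]
    exact hface s hs

theorem exists_edge_dotProduct_lt {A : Set (ι → ℝ)} {m V g : ι → ℝ} (hA : A.Finite)
    (hm : ∀ s ∈ A, s ≠ V → m ⬝ᵥ s < m ⬝ᵥ V) (hg : ∃ s ∈ A, g ⬝ᵥ V < g ⬝ᵥ s) :
    ∃ Z ∈ A, g ⬝ᵥ V < g ⬝ᵥ Z ∧ ∃ c : ι → ℝ, IsMaxOn (c ⬝ᵥ ·) A V ∧ c ⬝ᵥ Z = c ⬝ᵥ V ∧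
      {s ∈ A | c ⬝ᵥ s = c ⬝ᵥ V} ⊆ segment ℝ V Z := by
  obtain ⟨s₀, hs₀, hgs₀⟩ := hg
  have hs₀V : s₀ ∈ A \ {V} := ⟨hs₀, by rintro rfl; exact hgs₀.false⟩
  obtain ⟨f, hfV, hfface⟩ := exists_isMaxOn_face_eq_argmax_rayDir hA hm ⟨s₀, hs₀V⟩ g
  set A₁ := {s ∈ A | f ⬝ᵥ s = f ⬝ᵥ V}
  have hincr : ∀ s ∈ A₁, s ≠ V → g ⬝ᵥ V < g ⬝ᵥ s := fun s hs hsV => by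
    rw [← dotProduct_rayDir_pos_iff (hm s hs.1 hsV)]
    exact ((dotProduct_rayDir_pos_iff (hm s₀ hs₀ hs₀V.2) g).2 hgs₀).trans_le
      ((hfface s ⟨hs.1, hsV⟩).1 hs.2 hs₀V)
  obtain ⟨s₁, hs₁, hs₁max⟩ := (A \ {V}).exists_max_image (fun t => g ⬝ᵥ rayDir m V t)
    (hA.subset sdiff_subset) ⟨s₀, hs₀V⟩
  obtain ⟨Z, hZ, c, hcV, hcZ, hcseg⟩ := exists_isMaxOn_face_subset_segment (A := A₁)
    (hA.subset (sep_subset _ _)) (fun s hs => hm s hs.1)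
    ⟨s₁, ⟨hs₁.1, (hfface s₁ hs₁).2 hs₁max⟩, hs₁.2⟩
  obtain ⟨F, hFV, hFface⟩ := exists_isMaxOn_dotProduct_face_iff hA hfV hcV
  refine ⟨Z, hZ.1.1, hincr Z hZ.1 hZ.2, F, hFV, (hFface Z hZ.1.1).2 ⟨hZ.1.2, hcZ⟩,
    fun s ⟨hs, hFs⟩ => ?_⟩
  obtain ⟨hfs, hcs⟩ := (hFface s hs).1 hFs
  exact hcseg ⟨⟨hs, hfs⟩, hcs⟩

end VertexFigure

theorem edgeNeighbor_convexHull {n : ℕ} {S : Set (Fin n → ℝ)} {V Z F : Fin n → ℝ} (hV : V ∈ S)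
    (hZ : Z ∈ S) (hZV : Z ≠ V) (hF : IsMaxOn (F ⬝ᵥ ·) S V) (hFZ : F ⬝ᵥ Z = F ⬝ᵥ V)
    (hface : {s ∈ S | F ⬝ᵥ s = F ⬝ᵥ V} ⊆ segment ℝ V Z) :
    EdgeNeighbor (convexHull ℝ S) V Z := by
  classical
  let l : StrongDual ℝ (Fin n → ℝ) := LinearMap.toContinuousLinearMap (dotProductEquiv ℝ _ F)
  have hexp : IsExposed ℝ (convexHull ℝ S) (segment ℝ V Z) :=
    isExposed_segment_of_isMaxOn l hV hZ hF hFZ hface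
  refine ⟨hexp.isExtreme.extremePoints_subset_extremePoints (right_mem_extremePoints_segment_s7 V Z),
    hZV, ⟨V, left_mem_segment ℝ V Z⟩, hexp, ?_⟩
  rw [vectorSpan_segment, finrank_span_singleton (vsub_ne_zero.2 hZV)]

section Slope

variable {ι : Type*} [Fintype ι] {a E V q : ι → ℝ} {β : ℝ}

theorem le_div_dotProduct_iff (h : a ⬝ᵥ V < a ⬝ᵥ q) :
    β ≤ (E ⬝ᵥ q - E ⬝ᵥ V) / (a ⬝ᵥ q - a ⬝ᵥ V) ↔ (β • a - E) ⬝ᵥ q ≤ (β • a - E) ⬝ᵥ V := by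
  rw [le_div_iff₀ (sub_pos.2 h)]
  simp only [sub_dotProduct, smul_dotProduct, smul_eq_mul]
  constructor <;> intro <;> linarith

theorem div_dotProduct_eq_iff (h : a ⬝ᵥ V < a ⬝ᵥ q) :
    (E ⬝ᵥ q - E ⬝ᵥ V) / (a ⬝ᵥ q - a ⬝ᵥ V) = β ↔ (β • a - E) ⬝ᵥ q = (β • a - E) ⬝ᵥ V := by
  rw [div_eq_iff (sub_pos.2 h).ne']
  simp only [sub_dotProduct, smul_dotProduct, smul_eq_mul]
  constructor <;> intro <;> linarith

end Slope

theorem stmt_7_general (n : ℕ) (S : Set (Fin n → ℝ)) (hS : S.Finite)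
    (P : Set (Fin n → ℝ)) (hP : P = convexHull ℝ S)
    (a E : Fin n → ℝ)
    (V : Fin n → ℝ) (hV : V ∈ Set.extremePoints ℝ P)
    (hopt : ∀ p ∈ P, dot a p = dot a V → dot E V ≤ dot E p)
    (hmin : ∀ p ∈ P, dot a V ≤ dot a p)
    (Nplus : Set (Fin n → ℝ))
    (hNp : Nplus = {Z | EdgeNeighbor P V Z ∧ dot a V < dot a Z})
    (γp : ℝ)
    (hγp : IsLeast ((fun Z => (dot E Z - dot E V) / (dot a Z - dot a V)) '' Nplus) γp) :
    ∀ p ∈ P, dot a V < dot a p →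
      γp ≤ (dot E p - dot E V) / (dot a p - dot a V) := by
  classical
  intro p hp hap
  simp only [dot_eq_dotProduct] at *
  subst hP hNp
  obtain ⟨m, hm⟩ := exists_dotProduct_lt_of_mem_extremePoints hS hV
  have hup : {s ∈ S | a ⬝ᵥ V < a ⬝ᵥ s}.Nonempty := by
    by_contra h
    have ha : IsMaxOn (a ⬝ᵥ ·) S V := fun s hs => not_lt.1 fun h' => h ⟨s, hs, h'⟩
    exact (isMaxOn_convexHull (dotProductEquiv ℝ _ a) ha hp).not_gt hap
  obtain ⟨s₁, ⟨hs₁, has₁⟩, hβ⟩ := {s ∈ S | a ⬝ᵥ V < a ⬝ᵥ s}.exists_min_image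
    (fun q => (E ⬝ᵥ q - E ⬝ᵥ V) / (a ⬝ᵥ q - a ⬝ᵥ V)) (hS.subset (sep_subset _ _)) hup
  set β := (E ⬝ᵥ s₁ - E ⬝ᵥ V) / (a ⬝ᵥ s₁ - a ⬝ᵥ V)
  have hc₀ : IsMaxOn ((β • a - E) ⬝ᵥ ·) S V := fun s hs => by
    rcases (hmin s (subset_convexHull ℝ S hs)).lt_or_eq with has | has
    · exact (le_div_dotProduct_iff has).1 (hβ s ⟨hs, has⟩)
    · have := hopt s (subset_convexHull ℝ S hs) has.symm
      show (β • a - E) ⬝ᵥ s ≤ (β • a - E) ⬝ᵥ V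
      simp only [sub_dotProduct, smul_dotProduct, smul_eq_mul, has]
      linarith
  obtain ⟨Z, ⟨hZS, hZβ⟩, haZ, c, hcV, hcZ, hcseg⟩ :=
    exists_edge_dotProduct_lt (A := {s ∈ S | (β • a - E) ⬝ᵥ s = (β • a - E) ⬝ᵥ V})
      (hS.subset (sep_subset _ _)) (fun s hs => hm s hs.1)
      ⟨s₁, ⟨hs₁, (div_dotProduct_eq_iff has₁).1 rfl⟩, has₁⟩
  obtain ⟨F, hFV, hFface⟩ := exists_isMaxOn_dotProduct_face_iff hS hc₀ hcV
  have hedge : EdgeNeighbor (convexHull ℝ S) V Z :=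
    edgeNeighbor_convexHull (extremePoints_convexHull_subset hV) hZS
      (ne_of_apply_ne (a ⬝ᵥ ·) haZ.ne') hFV ((hFface Z hZS).2 ⟨hZβ, hcZ⟩)
      fun s ⟨hs, hFs⟩ => hcseg ⟨⟨hs, ((hFface s hs).1 hFs).1⟩, ((hFface s hs).1 hFs).2⟩
  calc γp ≤ (E ⬝ᵥ Z - E ⬝ᵥ V) / (a ⬝ᵥ Z - a ⬝ᵥ V) := hγp.2 ⟨Z, ⟨hedge, haZ⟩, rfl⟩
    _ = β := (div_dotProduct_eq_iff haZ).2 hZβ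
    _ ≤ (E ⬝ᵥ p - E ⬝ᵥ V) / (a ⬝ᵥ p - a ⬝ᵥ V) :=
      (le_div_dotProduct_iff hap).2 (isMaxOn_convexHull (dotProductEquiv ℝ _ _) hc₀ hp)

/-- At a cost-optimal vertex `V` of minimal target value, the cost-vs-target
gradient towards any point of the polytope with larger target value is at least `γ⁺min`, the
minimal gradient over target-increasing edge-neighbors. -/
theorem stmt_7 (n : ℕ) (S : Set (Fin n → ℝ)) (hS : S.Finite)
    (P : Set (Fin n → ℝ)) (hP : P = convexHull ℝ S)
    (a E : Fin n → ℝ)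
    (V : Fin n → ℝ) (hV : V ∈ Set.extremePoints ℝ P)
    (hopt : ∀ p ∈ P, dot a p = dot a V → dot E V ≤ dot E p)
    (hmin : ∀ p ∈ P, dot a V ≤ dot a p)
    (Nplus : Set (Fin n → ℝ))
    (hNp : Nplus = {Z | EdgeNeighbor P V Z ∧ dot a V < dot a Z})
    (hNpne : Nplus.Nonempty)
    (γp : ℝ)
    (hγp : IsLeast ((fun Z => (dot E Z - dot E V) / (dot a Z - dot a V)) '' Nplus) γp) :
    ∀ p ∈ P, dot a V < dot a p →
      γp ≤ (dot E p - dot E V) / (dot a p - dot a V) :=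
  stmt_7_general n S hS P hP a E V hV hopt hmin Nplus hNp γp hγp
end

section
/- Let λ : Fin n → ℝ. The set of extreme points of the population polytope P(λ) equals the set {λ ∘ σ : σ ∈ Equiv.Perm (Fin n)} of all coordinate permutations of λ; in particular, every coordinate permutation of λ is a vertex of P(λ). -/
private lemma sq_sum_combo {n : ℕ} (x y : Fin n → ℝ) (a b : ℝ) (hab : a + b = 1) :
    ∑ i, (a * x i + b * y i) ^ 2 =
      a * ∑ i, x i ^ 2 + b * ∑ i, y i ^ 2 - a * b * ∑ i, (x i - y i) ^ 2 := by
  have hb : b = 1 - a := by linarith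
  subst hb
  rw [Finset.mul_sum, Finset.mul_sum, Finset.mul_sum, ← Finset.sum_add_distrib,
    ← Finset.sum_sub_distrib]
  exact Finset.sum_congr rfl fun i _ => by ring

private lemma convexOn_sq_sum {n : ℕ} :
    ConvexOn ℝ Set.univ (fun x : Fin n → ℝ => ∑ i, x i ^ 2) := by
  refine ⟨convex_univ, fun x _ y _ a b ha hb hab => ?_⟩
  simp only [Pi.add_apply, Pi.smul_apply, smul_eq_mul]
  rw [sq_sum_combo x y a b hab]
  have h : 0 ≤ a * b * ∑ i, (x i - y i) ^ 2 :=
    mul_nonneg (mul_nonneg ha hb) (Finset.sum_nonneg fun i _ => sq_nonneg _)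
  linarith

/-- The extreme points of the population polytope of `lam` are exactly the
coordinate permutations of `lam`; in particular every coordinate permutation is a vertex. -/
theorem stmt_9 (n : ℕ) (lam : Fin n → ℝ) :
    Set.extremePoints ℝ
        (convexHull ℝ {x : Fin n → ℝ | ∃ σ : Equiv.Perm (Fin n), x = lam ∘ σ}) =
      {x : Fin n → ℝ | ∃ σ : Equiv.Perm (Fin n), x = lam ∘ σ} := by
  set S : Set (Fin n → ℝ) := {x | ∃ σ : Equiv.Perm (Fin n), x = lam ∘ σ} with hS
  set c : ℝ := ∑ i, lam i ^ 2 with hc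
  have hfS : ∀ y ∈ S, (∑ i, y i ^ 2) = c := by
    rintro y ⟨τ, rfl⟩
    simpa [Function.comp] using Equiv.sum_comp τ (fun i => lam i ^ 2)
  have hle : ∀ y ∈ convexHull ℝ S, (∑ i, y i ^ 2) ≤ c := by
    intro y hy
    obtain ⟨z, hz, hzy⟩ :=
      convexOn_sq_sum.exists_ge_of_mem_convexHull (Set.subset_univ S) hy
    calc (∑ i, y i ^ 2) ≤ ∑ i, z i ^ 2 := hzy
      _ = c := hfS z hz
  apply subset_antisymm extremePoints_convexHull_subset
  rintro x ⟨σ, rfl⟩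
  rw [mem_extremePoints]
  refine ⟨subset_convexHull ℝ S ⟨σ, rfl⟩, ?_⟩
  intro x₁ h₁ x₂ h₂ hx
  obtain ⟨a, b, ha, hb, hab, hcomb⟩ := hx
  have hfx : (∑ i, (lam ∘ σ) i ^ 2) = c := hfS _ ⟨σ, rfl⟩
  have hexp : (∑ i, (lam ∘ σ) i ^ 2) =
      a * ∑ i, x₁ i ^ 2 + b * ∑ i, x₂ i ^ 2 - a * b * ∑ i, (x₁ i - x₂ i) ^ 2 := by
    rw [← hcomb]
    simpa only [Pi.add_apply, Pi.smul_apply, smul_eq_mul] using sq_sum_combo x₁ x₂ a b hab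
  have h₁' := hle x₁ h₁
  have h₂' := hle x₂ h₂
  have hc1 : a * c + b * c = c := by rw [← add_mul, hab, one_mul]
  have hsum : (∑ i, (x₁ i - x₂ i) ^ 2) ≤ 0 := by
    by_contra h
    push_neg at h
    have hpos : 0 < a * b * ∑ i, (x₁ i - x₂ i) ^ 2 := mul_pos (mul_pos ha hb) h
    have ha1 := mul_le_mul_of_nonneg_left h₁' ha.le
    have hb1 := mul_le_mul_of_nonneg_left h₂' hb.le
    linarith
  have hsum0 : (∑ i, (x₁ i - x₂ i) ^ 2) = 0 :=
    le_antisymm hsum (Finset.sum_nonneg fun i _ => sq_nonneg _)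
  have heq : x₁ = x₂ := by
    funext i
    have := (Finset.sum_eq_zero_iff_of_nonneg (fun i _ => sq_nonneg (x₁ i - x₂ i))).1 hsum0
      i (Finset.mem_univ i)
    have := pow_eq_zero_iff (n := 2) (by norm_num) |>.1 this
    linarith [sub_eq_zero.1 this]
  subst heq
  have hx2 : x₁ = lam ∘ σ := by rw [← hcomb, Convex.combo_self hab]
  exact ⟨hx2, hx2⟩
end

section
/- Let a : Fin n → ℝ and let σ : Equiv.Perm (Fin n) be a cycle (Equiv.Perm.IsCycle σ). Then there exists a list l of permutations of Fin n such that: the elements of l are pairwise disjoint (Equiv.Perm.Disjoint), every element of l is a cycle, a is injective on the support of every element of l, and the permuted tuples coincide: a ∘ σ = a ∘ (l.prod). -/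
/-!
Only the action `a ∘ σ` on the tuple matters. If a cycle `σ` moves two positions `i ≠ j` with
`a i = a j`, then `swap i j * σ` acts on `a` in the same way; it is not a cycle with the support of
`σ`, its sign being the opposite one, so its cycle factors have strictly smaller supports. Induction
on the size of the support handles these factors, and decompositions of disjoint permutations can
be concatenated because disjoint permutations commute.
-/
namespace Equiv.Perm

variable {α β : Type*}

theorem comp_mul_congr {a : α → β} {p p' q q' : Perm α} (hpq : Disjoint p q)
    (hpq' : Disjoint p q') (hp : a ∘ p = a ∘ p') (hq : a ∘ q = a ∘ q') :
    a ∘ ⇑(p * q) = a ∘ ⇑(p' * q') := by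
  calc a ∘ ⇑(p * q) = a ∘ q ∘ p := by rw [hpq.commute.eq, coe_mul]
    _ = a ∘ q' ∘ p := by rw [← Function.comp_assoc, hq]; rfl
    _ = a ∘ p ∘ q' := by rw [← coe_mul, ← coe_mul, hpq'.commute.eq]
    _ = a ∘ ⇑(p' * q') := by rw [← Function.comp_assoc, hp]; rfl

theorem comp_swap_mul {a : α → β} [DecidableEq α] {i j : α} (h : a i = a j) (σ : Perm α) :
    a ∘ ⇑(swap i j * σ) = a ∘ σ := by
  have hswap : a ∘ ⇑(swap i j) = a := by
    rw [comp_swap_eq_update, h, Function.update_eq_self, ← h, Function.update_eq_self]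
  rw [coe_mul, ← Function.comp_assoc, hswap]

variable [DecidableEq α] [Fintype α]

theorem of_forall_mem_cycleFactorsFinset {P : Perm α → Prop} (one : P 1)
    (mul : ∀ σ τ, Disjoint σ τ → P σ → P τ → P (σ * τ)) (σ : Perm α)
    (h : ∀ c ∈ σ.cycleFactorsFinset, P c) : P σ := by
  induction σ using cycle_induction_on with
  | base_one => exact one
  | base_cycles σ hσ => exact h σ (by simp [hσ.cycleFactorsFinset_eq_singleton])
  | induction_disjoint σ τ hστ _ hσ hτ =>
    simp only [hστ.cycleFactorsFinset_mul_eq_union, Finset.mem_union] at h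
    exact mul σ τ hστ (hσ fun c hc => h c (.inl hc)) (hτ fun c hc => h c (.inr hc))

theorem support_swap_mul_subset {σ : Perm α} {i j : α} (hi : i ∈ σ.support)
    (hj : j ∈ σ.support) : (swap i j * σ).support ⊆ σ.support := by
  refine (support_mul_le _ σ).trans (Finset.union_subset ?_ le_rfl)
  by_cases hij : i = j
  · simp [hij]
  · simp [support_swap hij, Finset.insert_subset_iff, hi, hj]

theorem IsCycle.card_support_lt_of_mem_cycleFactorsFinset_swap_mul {σ c : Perm α}
    (hσ : σ.IsCycle) {i j : α} (hij : i ≠ j) (hi : i ∈ σ.support) (hj : j ∈ σ.support)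
    (hc : c ∈ (swap i j * σ).cycleFactorsFinset) : c.support.card < σ.support.card := by
  set σ' := swap i j * σ
  have hcσ' : c.support ⊆ σ'.support := mem_cycleFactorsFinset_support_le hc
  have hσ'σ : σ'.support ⊆ σ.support := support_swap_mul_subset hi hj
  by_contra! hle
  have hcσ : c.support = σ.support := Finset.eq_of_subset_of_card_le (hcσ'.trans hσ'σ) hle
  have hσ'_eq : σ'.support = σ.support := hσ'σ.antisymm (hcσ ▸ hcσ')
  have hc_eq : c = σ' := Perm.support_congr hcσ' fun x hx =>
    (mem_cycleFactorsFinset_iff.mp hc).2 x (hcσ ▸ hσ'_eq ▸ hx)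
  have hsign_eq : Perm.sign σ' = Perm.sign σ := by
    rw [(hc_eq ▸ (mem_cycleFactorsFinset_iff.mp hc).1 : σ'.IsCycle).sign, hσ.sign, hσ'_eq]
  have hsign_neg : Perm.sign σ' = -Perm.sign σ := by
    rw [map_mul, sign_swap hij, neg_one_mul]
  exact units_ne_neg_self _ (hsign_eq.symm.trans hsign_neg)

/-- The support condition is what lets decompositions of disjoint permutations be concatenated. -/
structure IsInjCycleDecomp (a : α → β) (σ : Perm α) (l : List (Perm α)) : Prop where
  pairwise_disjoint : l.Pairwise Disjoint
  isCycle : ∀ τ ∈ l, τ.IsCycle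
  injOn : ∀ τ ∈ l, Set.InjOn a (τ.support : Set α)
  support_subset : ∀ τ ∈ l, τ.support ⊆ σ.support
  comp_eq : a ∘ σ = a ∘ l.prod

namespace IsInjCycleDecomp

variable {a : α → β}

theorem nil : IsInjCycleDecomp a 1 [] := by
  constructor <;> simp

theorem singleton {σ : Perm α} (hσ : σ.IsCycle) (ha : Set.InjOn a (σ.support : Set α)) :
    IsInjCycleDecomp a σ [σ] := by
  constructor <;> simp [hσ, ha]

theorem mul {σ π : Perm α} {l m : List (Perm α)} (hσπ : Disjoint σ π)
    (hl : IsInjCycleDecomp a σ l) (hm : IsInjCycleDecomp a π m) :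
    IsInjCycleDecomp a (σ * π) (l ++ m) where
  pairwise_disjoint := List.pairwise_append.mpr ⟨hl.pairwise_disjoint, hm.pairwise_disjoint,
    fun _ hτ _ hυ => hσπ.mono (hl.support_subset _ hτ) (hm.support_subset _ hυ)⟩
  isCycle τ hτ := (List.mem_append.mp hτ).elim (hl.isCycle τ) (hm.isCycle τ)
  injOn τ hτ := (List.mem_append.mp hτ).elim (hl.injOn τ) (hm.injOn τ)
  support_subset τ hτ := hσπ.support_mul ▸ (List.mem_append.mp hτ).elim
    (fun h => (hl.support_subset τ h).trans Finset.subset_union_left)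
    (fun h => (hm.support_subset τ h).trans Finset.subset_union_right)
  comp_eq := by
    rw [List.prod_append]
    exact comp_mul_congr hσπ (disjoint_prod_right m fun τ hτ =>
      hσπ.mono le_rfl (hm.support_subset τ hτ)) hl.comp_eq hm.comp_eq

theorem of_comp_eq {σ σ' : Perm α} {l : List (Perm α)} (hl : IsInjCycleDecomp a σ' l)
    (hsupp : σ'.support ⊆ σ.support) (hcomp : a ∘ σ = a ∘ σ') : IsInjCycleDecomp a σ l where
  __ := hl
  support_subset τ hτ := (hl.support_subset τ hτ).trans hsupp
  comp_eq := hcomp.trans hl.comp_eq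

end IsInjCycleDecomp

theorem exists_isInjCycleDecomp_of_forall_mem_cycleFactorsFinset {a : α → β} (σ : Perm α)
    (h : ∀ c ∈ σ.cycleFactorsFinset, ∃ l, IsInjCycleDecomp a c l) :
    ∃ l, IsInjCycleDecomp a σ l :=
  of_forall_mem_cycleFactorsFinset ⟨[], .nil⟩
    (fun _ _ hστ ⟨l, hl⟩ ⟨m, hm⟩ => ⟨l ++ m, hl.mul hστ hm⟩) σ h

theorem IsCycle.exists_isInjCycleDecomp (a : α → β) {σ : Perm α} (hσ : σ.IsCycle) :
    ∃ l, IsInjCycleDecomp a σ l := by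
  induction h : σ.support.card using Nat.strong_induction_on generalizing σ with
  | _ k ih =>
    by_cases hinj : Set.InjOn a (σ.support : Set α)
    · exact ⟨[σ], .singleton hσ hinj⟩
    obtain ⟨i, hi, j, hj, haij, hij⟩ : ∃ i ∈ σ.support, ∃ j ∈ σ.support, a i = a j ∧ i ≠ j := by
      simpa [Set.InjOn] using hinj
    obtain ⟨l, hl⟩ := exists_isInjCycleDecomp_of_forall_mem_cycleFactorsFinset (swap i j * σ)
      fun c hc => ih _ (h ▸ hσ.card_support_lt_of_mem_cycleFactorsFinset_swap_mul hij hi hj hc)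
        (mem_cycleFactorsFinset_iff.mp hc).1 rfl
    exact ⟨l, hl.of_comp_eq (support_swap_mul_subset hi hj) (comp_swap_mul haij σ).symm⟩

theorem exists_isInjCycleDecomp (a : α → β) (σ : Perm α) : ∃ l, IsInjCycleDecomp a σ l :=
  exists_isInjCycleDecomp_of_forall_mem_cycleFactorsFinset σ fun _ hc =>
    (mem_cycleFactorsFinset_iff.mp hc).1.exists_isInjCycleDecomp a

end Equiv.Perm

theorem stmt_12_general (n : ℕ) (a : Fin n → ℝ) (σ : Equiv.Perm (Fin n)) :
    ∃ l : List (Equiv.Perm (Fin n)),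
      l.Pairwise Equiv.Perm.Disjoint ∧
      (∀ τ ∈ l, τ.IsCycle) ∧
      (∀ τ ∈ l, Set.InjOn a (τ.support : Set (Fin n))) ∧
      a ∘ σ = a ∘ l.prod := by
  obtain ⟨l, hl⟩ := Equiv.Perm.exists_isInjCycleDecomp a σ
  exact ⟨l, hl.pairwise_disjoint, hl.isCycle, hl.injOn, hl.comp_eq⟩

/-- Every cyclic permutation of a tuple `a` acts on `a` like a product of
pairwise disjoint cycles, each of which moves only positions carrying distinct values of `a`. -/
theorem stmt_12 (n : ℕ) (a : Fin n → ℝ) (σ : Equiv.Perm (Fin n))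
    (hσ : σ.IsCycle) :
    ∃ l : List (Equiv.Perm (Fin n)),
      l.Pairwise Equiv.Perm.Disjoint ∧
      (∀ τ ∈ l, τ.IsCycle) ∧
      (∀ τ ∈ l, Set.InjOn a (τ.support : Set (Fin n))) ∧
      a ∘ σ = a ∘ l.prod :=
  stmt_12_general n a σ
end

section
/- Let λ, a : Fin n → ℝ, and let ρ, π be permutations of Fin n such that a ∘ ρ is monotone nondecreasing and λ ∘ π is monotone nonincreasing. Then the point b defined by b (ρ i) = (λ ∘ π) i is a coordinate permutation of λ achieving the minimum of p ↦ a·p over the population polytope P(λ): for every p ∈ P(λ), a·b ≤ a·p, and a·b = ∑ i, (a ∘ ρ) i * (λ ∘ π) i. -/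
/-- Pairing the values of `lam` in decreasing order against the coefficients of
`a` in increasing order yields a coordinate permutation `b` of `lam` minimizing `p ↦ a·p` over
the population polytope of `lam`, with minimal value `∑ i, (a ∘ ρ) i * (lam ∘ π) i`. -/
theorem stmt_14 (n : ℕ) (lam a : Fin n → ℝ) (ρ π : Equiv.Perm (Fin n))
    (hρ : Monotone (a ∘ ρ)) (hπ : Antitone (lam ∘ π))
    (b : Fin n → ℝ) (hb : ∀ i, b (ρ i) = (lam ∘ π) i) :
    (∃ σ : Equiv.Perm (Fin n), b = lam ∘ σ) ∧
    (∀ p ∈ convexHull ℝ {x : Fin n → ℝ | ∃ σ : Equiv.Perm (Fin n), x = lam ∘ σ},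
      (∑ i, a i * b i) ≤ ∑ i, a i * p i) ∧
    (∑ i, a i * b i) = ∑ i, (a ∘ ρ) i * (lam ∘ π) i := by
  have hbdef : b = lam ∘ (π * ρ⁻¹) := by
    funext j
    have := hb (ρ⁻¹ j)
    simpa using this
  have hab : Antivary a b := by
    intro i j hlt
    set k := ρ⁻¹ i
    set l := ρ⁻¹ j
    have hi : i = ρ k := by simp [k]
    have hj : j = ρ l := by simp [l]
    have hbk : b i = (lam ∘ π) k := by rw [hi]; exact hb k
    have hbl : b j = (lam ∘ π) l := by rw [hj]; exact hb l
    have hlk : l < k := by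
      by_contra h
      push_neg at h
      have := hπ h
      rw [← hbk, ← hbl] at this
      exact absurd hlt (not_lt.2 this)
    have := hρ hlk.le
    rw [hi, hj]
    exact this
  have hmin : ∀ σ : Equiv.Perm (Fin n), (∑ i, a i * b i) ≤ ∑ i, a i * (lam ∘ σ) i := by
    intro σ
    have key : ∀ i, (lam ∘ σ) i = b ((ρ * π⁻¹ * σ) i) := by
      intro i
      have := hb (π⁻¹ (σ i))
      simpa using this.symm
    calc ∑ i, a i * b i ≤ ∑ i, a i * b ((ρ * π⁻¹ * σ) i) :=
          hab.sum_mul_le_sum_mul_comp_perm (σ := ρ * π⁻¹ * σ)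
      _ = ∑ i, a i * (lam ∘ σ) i := by simp_rw [← key]
  refine ⟨⟨π * ρ⁻¹, hbdef⟩, ?_, ?_⟩
  · intro p hp
    have hconv : Convex ℝ {p : Fin n → ℝ | (∑ i, a i * b i) ≤ ∑ i, a i * p i} := by
      have hlin : IsLinearMap ℝ (fun p : Fin n → ℝ => ∑ i, a i * p i) := by
        constructor
        · intro x y; simp [mul_add, Finset.sum_add_distrib]
        · intro c x; simp [Finset.mul_sum, mul_comm, mul_left_comm]
      exact convex_halfSpace_ge hlin _
    have hsub : {x : Fin n → ℝ | ∃ σ : Equiv.Perm (Fin n), x = lam ∘ σ} ⊆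
        {p : Fin n → ℝ | (∑ i, a i * b i) ≤ ∑ i, a i * p i} := by
      rintro x ⟨σ, rfl⟩
      exact hmin σ
    exact convexHull_min hsub hconv hp
  · rw [← Equiv.sum_comp ρ (fun i => a i * b i)]
    exact Finset.sum_congr rfl fun i _ => by simp [hb i]
end

section
/- Let A : Matrix (Fin n) (Fin n) ℂ be Hermitian with hA : A.IsHermitian, and let hA.eigenvalues : Fin n → ℝ be its eigenvalues. If there is a permutation σ of Fin n such that A i i = (hA.eigenvalues (σ i) : ℂ) for every i, then A is diagonal: A i j = 0 whenever i ≠ j. -/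
/-!
Both the diagonal entries and the eigenvalues of a Hermitian matrix `A` account for the trace of
`A * A`: on one side it is `∑ i j, ‖A i j‖ ^ 2`, on the other `∑ i, λ i ^ 2` by unitary
diagonalization. If the diagonal is a permutation of the eigenvalues, then `∑ i, ‖A i i‖ ^ 2`
already equals `∑ i, λ i ^ 2`, leaving no room for nonzero off-diagonal entries.
-/

open Unitary

theorem Finset.eq_zero_of_sum_le_sum_diag {ι : Type*} [Fintype ι] {f : ι → ι → ℝ}
    (hf : ∀ i j, 0 ≤ f i j) (hle : ∑ i, ∑ j, f i j ≤ ∑ i, f i i) {i j : ι} (hij : i ≠ j) :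
    f i j = 0 := by
  by_contra hne
  have hpos : 0 < f i j := (hf i j).lt_of_ne' hne
  refine hle.not_gt ?_
  refine Finset.sum_lt_sum (fun k _ => Finset.single_le_sum (fun l _ => hf k l) (mem_univ k))
    ⟨i, mem_univ i, ?_⟩
  exact Finset.single_lt_sum hij.symm (mem_univ i) (mem_univ j) hpos fun k _ _ => hf i k

namespace Matrix

variable {𝕜 : Type*} [RCLike 𝕜] {n : Type*} [Fintype n]

theorem trace_mul_conjTranspose_self {m : Type*} [Fintype m] (A : Matrix n m 𝕜) :
    (A * Aᴴ).trace = ∑ i, ∑ j, ((‖A i j‖ ^ 2 : ℝ) : 𝕜) := by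
  simp only [trace, diag_apply, mul_apply, conjTranspose_apply, RCLike.star_def, RCLike.mul_conj]
  push_cast
  rfl

theorem trace_conjStarAlgAut [DecidableEq n] (U : unitary (Matrix n n 𝕜)) (M : Matrix n n 𝕜) :
    (conjStarAlgAut 𝕜 _ U M).trace = M.trace := by
  rw [conjStarAlgAut_apply, trace_mul_cycle, coe_star_mul_self, one_mul]

namespace IsHermitian

variable [DecidableEq n] {A : Matrix n n 𝕜}

theorem trace_mul_self_eq_sum_sq_eigenvalues (hA : A.IsHermitian) :
    (A * A).trace = ∑ i, ((hA.eigenvalues i ^ 2 : ℝ) : 𝕜) := by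
  conv_lhs => rw [hA.spectral_theorem, ← map_mul, trace_conjStarAlgAut, diagonal_mul_diagonal,
    trace_diagonal]
  push_cast
  simp [sq]

theorem sum_norm_sq_eq_sum_sq_eigenvalues (hA : A.IsHermitian) :
    ∑ i, ∑ j, ‖A i j‖ ^ 2 = ∑ i, hA.eigenvalues i ^ 2 := by
  have htrace := hA.trace_mul_self_eq_sum_sq_eigenvalues
  conv_lhs at htrace => rw [← congrArg (A * ·) hA.eq, trace_mul_conjTranspose_self]
  exact_mod_cast htrace

end IsHermitian

end Matrix

/-- If the diagonal of a Hermitian matrix is a permutation of its eigenvalues,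
then the matrix is diagonal. -/
theorem stmt_15 (n : ℕ) (A : Matrix (Fin n) (Fin n) ℂ) (hA : A.IsHermitian)
    (σ : Equiv.Perm (Fin n))
    (h : ∀ i, A i i = (hA.eigenvalues (σ i) : ℂ)) :
    ∀ i j, i ≠ j → A i j = 0 := by
  intro i j hij
  have hdiag : ∑ i, ‖A i i‖ ^ 2 = ∑ i, hA.eigenvalues i ^ 2 := by
    simp only [h, Complex.norm_real, Real.norm_eq_abs, sq_abs]
    exact Equiv.sum_comp σ (hA.eigenvalues · ^ 2)
  have hsq : ‖A i j‖ ^ 2 = 0 :=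
    Finset.eq_zero_of_sum_le_sum_diag (f := fun k l => ‖A k l‖ ^ 2) (fun _ _ => sq_nonneg _)
      (by rw [hA.sum_norm_sq_eq_sum_sq_eigenvalues, hdiag]) hij
  simpa using hsq
end

section
/- Let P ⊆ (Fin m → ℝ) and Q ⊆ (Fin k → ℝ) be polytopes (convex hulls of finite nonempty sets), and let F ⊆ (Fin m → ℝ) × (Fin k → ℝ) be nonempty. Then F is an exposed face of the product set P ×ˢ Q if and only if there exist exposed faces F₁ of P and F₂ of Q with F = F₁ ×ˢ F₂; moreover in that case finrank ℝ (vectorSpan ℝ F) = finrank ℝ (vectorSpan ℝ F₁) + finrank ℝ (vectorSpan ℝ F₂). -/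
theorem aux_vectorSpan_prod {M N : Type*} [AddCommGroup M] [Module ℝ M]
    [AddCommGroup N] [Module ℝ N] (A : Set M) (B : Set N)
    (hA : A.Nonempty) (hB : B.Nonempty) :
    vectorSpan ℝ (A ×ˢ B) = (vectorSpan ℝ A).prod (vectorSpan ℝ B) := by
  obtain ⟨a0, ha0⟩ := hA
  obtain ⟨b0, hb0⟩ := hB
  apply le_antisymm
  · rw [vectorSpan_def, Submodule.span_le]
    rintro z hz
    obtain ⟨⟨p1, p2⟩, ⟨hp1, hp2⟩, ⟨q1, q2⟩, ⟨hq1, hq2⟩, rfl⟩ := Set.mem_vsub.mp hz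
    exact ⟨Submodule.subset_span (Set.vsub_mem_vsub hp1 hq1),
      Submodule.subset_span (Set.vsub_mem_vsub hp2 hq2)⟩
  · have h1 : (vectorSpan ℝ A).map (LinearMap.inl ℝ M N) ≤ vectorSpan ℝ (A ×ˢ B) := by
      rw [vectorSpan_def, vectorSpan_def, Submodule.map_span, Submodule.span_le]
      rintro _ ⟨w, hw, rfl⟩
      obtain ⟨a, ha, a', ha', rfl⟩ := Set.mem_vsub.mp hw
      refine Submodule.subset_span (Set.mem_vsub.mpr ⟨(a, b0), ⟨ha, hb0⟩, (a', b0), ⟨ha', hb0⟩, ?_⟩)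
      simp [vsub_eq_sub, Prod.ext_iff]
    have h2 : (vectorSpan ℝ B).map (LinearMap.inr ℝ M N) ≤ vectorSpan ℝ (A ×ˢ B) := by
      rw [vectorSpan_def, vectorSpan_def, Submodule.map_span, Submodule.span_le]
      rintro _ ⟨w, hw, rfl⟩
      obtain ⟨b, hb, b', hb', rfl⟩ := Set.mem_vsub.mp hw
      refine Submodule.subset_span (Set.mem_vsub.mpr ⟨(a0, b), ⟨ha0, hb⟩, (a0, b'), ⟨ha0, hb'⟩, ?_⟩)
      simp [vsub_eq_sub, Prod.ext_iff]
    rintro ⟨u, v⟩ ⟨hu, hv⟩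
    have : ((u, v) : M × N) = (u, 0) + (0, v) := by simp
    rw [this]
    exact add_mem (h1 ⟨u, hu, rfl⟩) (h2 ⟨v, hv, rfl⟩)


theorem aux_finrank_prod {M N : Type*} [AddCommGroup M] [Module ℝ M] [AddCommGroup N] [Module ℝ N]
    (p : Submodule ℝ M) (q : Submodule ℝ N) [Module.Finite ℝ p] [Module.Finite ℝ q] :
    Module.finrank ℝ (p.prod q) = Module.finrank ℝ p + Module.finrank ℝ q := by
  have e : (p.prod q) ≃ₗ[ℝ] p × q :=
    { toFun := fun x => (⟨x.1.1, x.2.1⟩, ⟨x.1.2, x.2.2⟩)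
      invFun := fun x => ⟨(x.1.1, x.2.1), x.1.2, x.2.2⟩
      map_add' := fun _ _ => rfl
      map_smul' := fun _ _ => rfl
      left_inv := fun _ => rfl
      right_inv := fun _ => rfl }
  rw [e.finrank_eq, Module.finrank_prod]

/-- A nonempty set `F` is an exposed face of a product `P ×ˢ Q` of polytopes iff
`F = F₁ ×ˢ F₂` for exposed faces `F₁` of `P` and `F₂` of `Q`; in that case the dimension of
`F` is the sum of the dimensions of `F₁` and `F₂`. -/
theorem stmt_16 (m k : ℕ) (Sp : Set (Fin m → ℝ)) (Sq : Set (Fin k → ℝ))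
    (hSpf : Sp.Finite) (hSpn : Sp.Nonempty) (hSqf : Sq.Finite) (hSqn : Sq.Nonempty)
    (P : Set (Fin m → ℝ)) (hP : P = convexHull ℝ Sp)
    (Q : Set (Fin k → ℝ)) (hQ : Q = convexHull ℝ Sq)
    (F : Set ((Fin m → ℝ) × (Fin k → ℝ))) (hF : F.Nonempty) :
    (IsExposed ℝ (P ×ˢ Q) F ↔
      ∃ (F₁ : Set (Fin m → ℝ)) (F₂ : Set (Fin k → ℝ)),
        F₁.Nonempty ∧ IsExposed ℝ P F₁ ∧ F₂.Nonempty ∧ IsExposed ℝ Q F₂ ∧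
        F = F₁ ×ˢ F₂) ∧
    (∀ (F₁ : Set (Fin m → ℝ)) (F₂ : Set (Fin k → ℝ)),
      F₁.Nonempty → IsExposed ℝ P F₁ → F₂.Nonempty → IsExposed ℝ Q F₂ →
      F = F₁ ×ˢ F₂ → IsExposed ℝ (P ×ˢ Q) F →
      Module.finrank ℝ ↥(vectorSpan ℝ F) =
        Module.finrank ℝ ↥(vectorSpan ℝ F₁) + Module.finrank ℝ ↥(vectorSpan ℝ F₂)) := by
  constructor
  · constructor
    · -- forward
      intro hE
      obtain ⟨l, hl⟩ := hE hF
      set l₁ : (Fin m → ℝ) →L[ℝ] ℝ := l.comp (ContinuousLinearMap.inl ℝ _ _) with hl₁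
      set l₂ : (Fin k → ℝ) →L[ℝ] ℝ := l.comp (ContinuousLinearMap.inr ℝ _ _) with hl₂
      have key : ∀ x y, l (x, y) = l₁ x + l₂ y := by
        intro x y
        have : ((x, y) : (Fin m → ℝ) × (Fin k → ℝ)) = (x, 0) + (0, y) := by simp
        rw [this, map_add]
        rfl
      obtain ⟨⟨a, b⟩, habF⟩ := hF
      have hab := habF
      rw [hl] at hab
      obtain ⟨⟨haP, hbQ⟩, hmax⟩ := hab
      refine ⟨{x ∈ P | ∀ y ∈ P, l₁ y ≤ l₁ x}, {x ∈ Q | ∀ y ∈ Q, l₂ y ≤ l₂ x},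
        ⟨a, haP, ?_⟩, fun _ => ⟨l₁, rfl⟩, ⟨b, hbQ, ?_⟩, fun _ => ⟨l₂, rfl⟩, ?_⟩
      · intro y hy
        have := hmax (y, b) ⟨hy, hbQ⟩
        rw [key, key] at this
        linarith
      · intro y hy
        have := hmax (a, y) ⟨haP, hy⟩
        rw [key, key] at this
        linarith
      · rw [hl]
        ext ⟨x, y⟩
        simp only [Set.mem_setOf_eq, Set.mem_sep_iff, Set.mem_prod, Prod.forall]
        constructor
        · rintro ⟨⟨hxP, hyQ⟩, h⟩
          refine ⟨⟨hxP, fun w hw => ?_⟩, ⟨hyQ, fun w hw => ?_⟩⟩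
          · have := h w y ⟨hw, hyQ⟩
            rw [key, key] at this; linarith
          · have := h x w ⟨hxP, hw⟩
            rw [key, key] at this; linarith
        · rintro ⟨⟨hxP, h1⟩, ⟨hyQ, h2⟩⟩
          refine ⟨⟨hxP, hyQ⟩, fun w₁ w₂ hw => ?_⟩
          rw [key, key]
          exact add_le_add (h1 w₁ hw.1) (h2 w₂ hw.2)
    · -- backward
      rintro ⟨F₁, F₂, hn1, he1, hn2, he2, rfl⟩
      intro _
      obtain ⟨l₁, hl1⟩ := he1 hn1
      obtain ⟨l₂, hl2⟩ := he2 hn2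
      obtain ⟨a1, ha1⟩ := hn1
      obtain ⟨b1, hb1⟩ := hn2
      refine ⟨l₁.comp (ContinuousLinearMap.fst ℝ _ _) + l₂.comp (ContinuousLinearMap.snd ℝ _ _), ?_⟩
      have ha1' := ha1; rw [hl1] at ha1'
      have hb1' := hb1; rw [hl2] at hb1'
      ext ⟨x, y⟩
      simp only [hl1, hl2, Set.mem_prod, Set.mem_sep_iff, Set.mem_setOf_eq,
        ContinuousLinearMap.add_apply, ContinuousLinearMap.comp_apply,
        ContinuousLinearMap.coe_fst', ContinuousLinearMap.coe_snd', Prod.forall]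
      constructor
      · rintro ⟨⟨hxP, h1⟩, ⟨hyQ, h2⟩⟩
        exact ⟨⟨hxP, hyQ⟩, fun w₁ w₂ hw => add_le_add (h1 w₁ hw.1) (h2 w₂ hw.2)⟩
      · rintro ⟨⟨hxP, hyQ⟩, h⟩
        refine ⟨⟨hxP, fun w hw => ?_⟩, ⟨hyQ, fun w hw => ?_⟩⟩
        · have := h w y ⟨hw, hyQ⟩
          have hb := ha1'.2 x hxP  -- not needed
          linarith
        · have := h x w ⟨hxP, hw⟩
          linarith
  · -- dimension
    rintro F₁ F₂ hn1 he1 hn2 he2 rfl hE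
    rw [aux_vectorSpan_prod F₁ F₂ hn1 hn2]
    exact aux_finrank_prod _ _
end

section
/- Let P ⊆ (Fin m → ℝ) and Q ⊆ (Fin k → ℝ) be polytopes (convex hulls of finite nonempty sets). A nonempty set F is an edge of P ×ˢ Q if and only if either F = E₁ ×ˢ {w} for some edge E₁ of P and some point w such that {w} is an exposed face of Q, or F = {v} ×ˢ E₂ for some point v such that {v} is an exposed face of P and some edge E₂ of Q. -/
open Set

section aux
variable {M N : Type*} [NormedAddCommGroup M] [NormedSpace ℝ M]
  [NormedAddCommGroup N] [NormedSpace ℝ N]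

/-- The exposed subset cut out by a coprod functional is the product of exposed subsets. -/
lemma exposed_set_coprod (P : Set M) (Q : Set N) (l₁ : M →L[ℝ] ℝ) (l₂ : N →L[ℝ] ℝ) :
    {z ∈ P ×ˢ Q | ∀ y ∈ P ×ˢ Q, (l₁.coprod l₂) y ≤ (l₁.coprod l₂) z}
      = {x ∈ P | ∀ y ∈ P, l₁ y ≤ l₁ x} ×ˢ {y ∈ Q | ∀ z ∈ Q, l₂ z ≤ l₂ y} := by
  ext ⟨x, y⟩
  simp only [Set.mem_setOf_eq, Set.mem_prod, ContinuousLinearMap.coprod_apply]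
  constructor
  · rintro ⟨⟨hx, hy⟩, h⟩
    refine ⟨⟨hx, fun x' hx' => ?_⟩, ⟨hy, fun y' hy' => ?_⟩⟩
    · have := h (x', y) ⟨hx', hy⟩; simpa using this
    · have := h (x, y') ⟨hx, hy'⟩; simpa using this
  · rintro ⟨⟨hx, h1⟩, hy, h2⟩
    exact ⟨⟨hx, hy⟩, fun z hz => add_le_add (h1 z.1 hz.1) (h2 z.2 hz.2)⟩

lemma vectorSpan_prod {A : Set M} {B : Set N} (hA : A.Nonempty) (hB : B.Nonempty) :
    vectorSpan ℝ (A ×ˢ B) = (vectorSpan ℝ A).prod (vectorSpan ℝ B) := by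
  obtain ⟨a₀, ha₀⟩ := hA
  obtain ⟨b₀, hb₀⟩ := hB
  apply le_antisymm
  · rw [vectorSpan_def, Submodule.span_le]
    rintro z hz
    rw [Set.mem_vsub] at hz
    obtain ⟨⟨a, b⟩, hab, ⟨a', b'⟩, hab', rfl⟩ := hz
    exact ⟨vsub_mem_vectorSpan ℝ hab.1 hab'.1, vsub_mem_vectorSpan ℝ hab.2 hab'.2⟩
  · rw [Submodule.prod_le_iff]
    constructor
    · rw [vectorSpan_def, Submodule.map_span, Submodule.span_le]
      rintro z ⟨u, hu, rfl⟩
      rw [Set.mem_vsub] at hu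
      obtain ⟨a, ha, a', ha', rfl⟩ := hu
      apply Submodule.subset_span
      rw [Set.mem_vsub]
      exact ⟨(a, b₀), ⟨ha, hb₀⟩, (a', b₀), ⟨ha', hb₀⟩, by simp [vsub_eq_sub, Prod.ext_iff]⟩
    · rw [vectorSpan_def, Submodule.map_span, Submodule.span_le]
      rintro z ⟨u, hu, rfl⟩
      rw [Set.mem_vsub] at hu
      obtain ⟨b, hb, b', hb', rfl⟩ := hu
      apply Submodule.subset_span
      rw [Set.mem_vsub]
      exact ⟨(a₀, b), ⟨ha₀, hb⟩, (a₀, b'), ⟨ha₀, hb'⟩, by simp [vsub_eq_sub, Prod.ext_iff]⟩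

/-- Linear equivalence between `p.prod q` and `p × q`. -/
def subProdEquiv (p : Submodule ℝ M) (q : Submodule ℝ N) : (p.prod q) ≃ₗ[ℝ] p × q where
  toFun z := (⟨z.1.1, z.2.1⟩, ⟨z.1.2, z.2.2⟩)
  invFun z := ⟨(z.1.1, z.2.1), ⟨z.1.2, z.2.2⟩⟩
  map_add' _ _ := rfl
  map_smul' _ _ := rfl
  left_inv _ := rfl
  right_inv _ := rfl

lemma finrank_sub_prod [FiniteDimensional ℝ M] [FiniteDimensional ℝ N]
    (p : Submodule ℝ M) (q : Submodule ℝ N) :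
    Module.finrank ℝ (p.prod q) = Module.finrank ℝ p + Module.finrank ℝ q := by
  rw [(subProdEquiv p q).finrank_eq, Module.finrank_prod]

lemma eq_singleton_of_finrank_zero [FiniteDimensional ℝ M] {A : Set M} (hA : A.Nonempty)
    (h : Module.finrank ℝ (vectorSpan ℝ A) = 0) : ∃ a, A = {a} := by
  obtain ⟨a, ha⟩ := hA
  refine ⟨a, Set.eq_singleton_iff_unique_mem.2 ⟨ha, fun b hb => ?_⟩⟩
  have hbot : vectorSpan ℝ A = ⊥ := Submodule.finrank_eq_zero.mp h
  have := vsub_mem_vectorSpan ℝ hb ha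
  rw [hbot, Submodule.mem_bot, vsub_eq_sub, sub_eq_zero] at this
  exact this

end aux
/-- A nonempty set `F` is an edge of a product `P ×ˢ Q` of polytopes iff it is
the product of an edge of one factor with an exposed-face singleton (vertex) of the other. -/
theorem stmt_17 (m k : ℕ) (Sp : Set (Fin m → ℝ)) (Sq : Set (Fin k → ℝ))
    (hSpf : Sp.Finite) (hSpn : Sp.Nonempty) (hSqf : Sq.Finite) (hSqn : Sq.Nonempty)
    (P : Set (Fin m → ℝ)) (hP : P = convexHull ℝ Sp)
    (Q : Set (Fin k → ℝ)) (hQ : Q = convexHull ℝ Sq)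
    (F : Set ((Fin m → ℝ) × (Fin k → ℝ))) (hF : F.Nonempty) :
    (IsExposed ℝ (P ×ˢ Q) F ∧ Module.finrank ℝ ↥(vectorSpan ℝ F) = 1) ↔
      ((∃ (E₁ : Set (Fin m → ℝ)) (w : Fin k → ℝ),
          E₁.Nonempty ∧ IsExposed ℝ P E₁ ∧ Module.finrank ℝ ↥(vectorSpan ℝ E₁) = 1 ∧
          IsExposed ℝ Q {w} ∧ F = E₁ ×ˢ ({w} : Set (Fin k → ℝ))) ∨
       (∃ (v : Fin m → ℝ) (E₂ : Set (Fin k → ℝ)),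
          IsExposed ℝ P ({v} : Set (Fin m → ℝ)) ∧
          E₂.Nonempty ∧ IsExposed ℝ Q E₂ ∧ Module.finrank ℝ ↥(vectorSpan ℝ E₂) = 1 ∧
          F = ({v} : Set (Fin m → ℝ)) ×ˢ E₂)) := by
  constructor
  · rintro ⟨hexp, hrank⟩
    obtain ⟨l, hl⟩ := hexp hF
    set l₁ : (Fin m → ℝ) →L[ℝ] ℝ := l.comp (ContinuousLinearMap.inl ℝ _ _) with hl₁def
    set l₂ : (Fin k → ℝ) →L[ℝ] ℝ := l.comp (ContinuousLinearMap.inr ℝ _ _) with hl₂def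
    have hdec : l = l₁.coprod l₂ := by
      apply ContinuousLinearMap.ext
      intro z
      simp only [ContinuousLinearMap.coprod_apply, hl₁def, hl₂def,
        ContinuousLinearMap.comp_apply, ContinuousLinearMap.inl_apply,
        ContinuousLinearMap.inr_apply]
      rw [← map_add]
      congr 1
      simp [Prod.ext_iff]
    rw [hdec] at hl
    rw [exposed_set_coprod] at hl
    set F₁ : Set (Fin m → ℝ) := {x ∈ P | ∀ y ∈ P, l₁ y ≤ l₁ x} with hF₁def
    set F₂ : Set (Fin k → ℝ) := {y ∈ Q | ∀ z ∈ Q, l₂ z ≤ l₂ y} with hF₂def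
    have hne : F₁.Nonempty ∧ F₂.Nonempty := by
      rw [← Set.prod_nonempty_iff, ← hl]; exact hF
    have hsum : Module.finrank ℝ ↥(vectorSpan ℝ F₁) + Module.finrank ℝ ↥(vectorSpan ℝ F₂) = 1 := by
      rw [← finrank_sub_prod, ← vectorSpan_prod hne.1 hne.2, ← hl]
      exact hrank
    have hexp₁ : IsExposed ℝ P F₁ := fun _ => ⟨l₁, rfl⟩
    have hexp₂ : IsExposed ℝ Q F₂ := fun _ => ⟨l₂, rfl⟩
    rcases (by omega :
        (Module.finrank ℝ ↥(vectorSpan ℝ F₁) = 1 ∧ Module.finrank ℝ ↥(vectorSpan ℝ F₂) = 0) ∨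
        (Module.finrank ℝ ↥(vectorSpan ℝ F₁) = 0 ∧ Module.finrank ℝ ↥(vectorSpan ℝ F₂) = 1))
      with ⟨h1, h2⟩ | ⟨h1, h2⟩
    · obtain ⟨w, hw⟩ := eq_singleton_of_finrank_zero hne.2 h2
      exact Or.inl ⟨F₁, w, hne.1, hexp₁, h1, hw ▸ hexp₂, by rw [hl, hw]⟩
    · obtain ⟨v, hv⟩ := eq_singleton_of_finrank_zero hne.1 h1
      exact Or.inr ⟨v, F₂, hv ▸ hexp₁, hne.2, hexp₂, h2, by rw [hl, hv]⟩
  · rintro (⟨E₁, w, hE₁n, hE₁exp, hE₁rank, hwexp, rfl⟩ | ⟨v, E₂, hvexp, hE₂n, hE₂exp, hE₂rank, rfl⟩)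
    · obtain ⟨l₁, hl₁⟩ := hE₁exp hE₁n
      obtain ⟨l₂, hl₂⟩ := hwexp (Set.singleton_nonempty w)
      refine ⟨fun _ => ⟨l₁.coprod l₂, ?_⟩, ?_⟩
      · rw [exposed_set_coprod, ← hl₁, ← hl₂]
      · rw [vectorSpan_prod hE₁n (Set.singleton_nonempty w), finrank_sub_prod, hE₁rank,
          vectorSpan_singleton]
        simp
    · obtain ⟨l₁, hl₁⟩ := hvexp (Set.singleton_nonempty v)
      obtain ⟨l₂, hl₂⟩ := hE₂exp hE₂n
      refine ⟨fun _ => ⟨l₁.coprod l₂, ?_⟩, ?_⟩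
      · rw [exposed_set_coprod, ← hl₁, ← hl₂]
      · rw [vectorSpan_prod (Set.singleton_nonempty v) hE₂n, finrank_sub_prod, hE₂rank,
          vectorSpan_singleton]
        simp
end

section
/- Let S ⊆ (Fin n → ℝ) be finite and nonempty, P = convexHull ℝ S, and a, E : Fin n → ℝ. Let α_min be the minimum of p ↦ a·p over P (which exists since P is compact and nonempty). Then there exists an extreme point V of P with a·V = α_min and E·V ≤ E·p for every p ∈ P with a·p = α_min; i.e. there is a cost-optimal vertex of P attaining the minimal target value. -/
/-!
Minimising `a·p` over the polytope `P` cuts out an exposed face `Q`, which is compact and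
nonempty. Minimising `E·p` over `Q` cuts out an exposed face of `Q`, again compact and nonempty,
so it has an extreme point by the Krein–Milman lemma. Faces of faces are faces, so this point is
an extreme point of `P`.
-/

open Set

section LexicographicMinimum

variable {E : Type*} [AddCommGroup E] [Module ℝ E] [TopologicalSpace E] {K : Set E}

theorem isExposed_setOf_eq_of_isLeast {l : StrongDual ℝ E} {m : ℝ} (hm : IsLeast (l '' K) m) :
    IsExposed ℝ K {x ∈ K | l x = m} := by
  intro _
  refine ⟨-l, ?_⟩
  ext x
  simp only [mem_ofPred_eq, neg_apply, neg_le_neg_iff]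
  refine and_congr_right fun hx => ⟨fun hxm y hy => hxm ▸ hm.2 ⟨y, hy, rfl⟩, fun hmin => ?_⟩
  obtain ⟨z, hz, rfl⟩ := hm.1
  exact le_antisymm (hmin z hz) (hm.2 ⟨x, hx, rfl⟩)

variable [T2Space E] [IsTopologicalAddGroup E] [ContinuousSMul ℝ E] [LocallyConvexSpace ℝ E]

theorem IsCompact.exists_mem_extremePoints_isMinOn (hK : IsCompact K) (hne : K.Nonempty)
    (l : StrongDual ℝ E) : ∃ x ∈ K.extremePoints ℝ, IsMinOn l K x := by
  have hexp : IsExposed ℝ K ((-l).toExposed K) := ContinuousLinearMap.toExposed.isExposed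
  obtain ⟨y, hyK, hy⟩ := hK.exists_isMinOn hne l.continuous.continuousOn
  obtain ⟨x, hx⟩ := (hexp.isCompact hK).extremePoints_nonempty
    ⟨y, hyK, fun z hz => neg_le_neg (hy hz)⟩
  exact ⟨x, hexp.isExtreme.extremePoints_subset_extremePoints hx,
    fun z hz => le_of_neg_le_neg (hx.1.2 z hz)⟩

theorem IsCompact.exists_mem_extremePoints_lexMin (hK : IsCompact K) {f : StrongDual ℝ E}
    {m : ℝ} (hm : IsLeast (f '' K) m) (g : StrongDual ℝ E) :
    ∃ x ∈ K.extremePoints ℝ, f x = m ∧ ∀ y ∈ K, f y = m → g x ≤ g y := by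
  have hface := isExposed_setOf_eq_of_isLeast hm
  have hne : {x ∈ K | f x = m}.Nonempty := by
    obtain ⟨x, hx, hfx⟩ := hm.1
    exact ⟨x, hx, hfx⟩
  obtain ⟨x, hx, hmin⟩ := (hface.isCompact hK).exists_mem_extremePoints_isMinOn hne g
  exact ⟨x, hface.isExtreme.extremePoints_subset_extremePoints hx, hx.1.2,
    fun y hy hfy => hmin ⟨hy, hfy⟩⟩

end LexicographicMinimum

noncomputable def dotProductCLM {n : ℕ} (a : Fin n → ℝ) : StrongDual ℝ (Fin n → ℝ) :=
  LinearMap.toContinuousLinearMap (dotProductBilin ℝ ℝ a)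

theorem stmt_18_general (n : ℕ) (S : Set (Fin n → ℝ)) (hSf : S.Finite)
    (P : Set (Fin n → ℝ)) (hP : P = convexHull ℝ S)
    (a E : Fin n → ℝ)
    (αmin : ℝ) (hα : IsLeast ((fun p => ∑ i, a i * p i) '' P) αmin) :
    ∃ V ∈ Set.extremePoints ℝ P, (∑ i, a i * V i) = αmin ∧
      ∀ p ∈ P, (∑ i, a i * p i) = αmin → (∑ i, E i * V i) ≤ ∑ i, E i * p i := by
  have hPcomp : IsCompact P := hP ▸ hSf.isCompact_convexHull (𝕜 := ℝ)
  exact hPcomp.exists_mem_extremePoints_lexMin (f := dotProductCLM a) hα (dotProductCLM E)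

/-- A (nonempty) polytope has a cost-optimal vertex attaining the minimal target
value `α_min`: an extreme point `V` with `a·V = α_min` and `E·V ≤ E·p` for every `p ∈ P` with
`a·p = α_min`. -/
theorem stmt_18 (n : ℕ) (S : Set (Fin n → ℝ)) (hSf : S.Finite) (hSn : S.Nonempty)
    (P : Set (Fin n → ℝ)) (hP : P = convexHull ℝ S)
    (a E : Fin n → ℝ)
    (αmin : ℝ) (hα : IsLeast ((fun p => ∑ i, a i * p i) '' P) αmin) :
    ∃ V ∈ Set.extremePoints ℝ P, (∑ i, a i * V i) = αmin ∧
      ∀ p ∈ P, (∑ i, a i * p i) = αmin → (∑ i, E i * V i) ≤ ∑ i, E i * p i :=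
  stmt_18_general n S hSf P hP a E αmin hα
end
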